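/- arXiv:1606.00491 — 8 statements merged into one kernel-verified Lean document; each statement's English description precedes it below -/
import Mathlib

section
/- Let f_1,…,f_m ∈ ℝ[x₁,…,x_n] with deg(f_i) ≤ d for all i, and let I = ⟨f_1,…,f_m⟩ be the ideal they generate in ℝ[x]. Let λ : ℝ[x]_{≤2d} → ℝ be a linear functional with λ(1) = 1 such that the truncated moment matrix M(λ) is positive semidefinite and M(λ)·vec(f_i) = 0 for every i. If M(λ) has maximum rank, i.e. for every linear functional λ' : ℝ[x]_{≤2d} → ℝ with λ'(1) = 1, M(λ') positive semidefinite and M(λ')·vec(f_i) = 0 for all i one has rank M(λ') ≤ rank M(λ), then ℙ(ker M(λ)) ⊆ √ᴿ(I). -/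
/-- The real radical of an ideal `I` in `ℝ[x₁,…,xₙ]`:
`{f : f^(2t) + q₁² + ⋯ + q_s² ∈ I` for some `t ≥ 1` and polynomials `q_j}`. -/
def realRadical {n : ℕ} (I : Ideal (MvPolynomial (Fin n) ℝ)) :
    Set (MvPolynomial (Fin n) ℝ) :=
  {f | ∃ t : ℕ, 1 ≤ t ∧ ∃ (s : ℕ) (q : Fin s → MvPolynomial (Fin n) ℝ),
      f ^ (2 * t) + ∑ j, q j ^ 2 ∈ I}

/-- The linear map underlying the truncated moment matrix `M(λ)` of level `d`:
it sends a polynomial `p` of total degree `≤ d` to the vector whose `α`-entry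
(for a monomial exponent `α` of degree `≤ d`) is `λ(x^α · p)`.  The rank of this
map is the rank of the moment matrix. -/
noncomputable def momentMap (n d : ℕ) (l : MvPolynomial (Fin n) ℝ →ₗ[ℝ] ℝ) :
    (MvPolynomial.restrictTotalDegree (Fin n) ℝ d) →ₗ[ℝ] ((Fin n →₀ ℕ) → ℝ) where
  toFun p := fun α => if (α.sum fun _ e => e) ≤ d then
      l (MvPolynomial.monomial α 1 * (p : MvPolynomial (Fin n) ℝ)) else 0
  map_add' p q := by
    funext α
    by_cases h : (α.sum fun _ e => e) ≤ d <;> simp [h, mul_add]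
  map_smul' c p := by
    funext α
    by_cases h : (α.sum fun _ e => e) ≤ d <;> simp [h, mul_smul_comm]

/-- The rank of the truncated moment matrix `M(λ)` of level `d`. -/
noncomputable def momentRank (n d : ℕ) (l : MvPolynomial (Fin n) ℝ →ₗ[ℝ] ℝ) : ℕ :=
  Module.finrank ℝ (LinearMap.range (momentMap n d l))

/-!
If `p ∉ √ᴿ(I)`, strict separation in the finite-dimensional space of Gram matrices over a
complement of `√ᴿ(I) ∩ ℝ[x]_{≤d}` produces a linear functional `μ` that vanishes on `√ᴿ(I)`,
is nonnegative on squares of degree `≤ d` polynomials and has `μ(p²) > 0`. The point is that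
`√ᴿ(I)` is a real ideal: a sum of squares lies in it only if every summand does, so no nonzero
positive semidefinite Gram matrix over that complement represents an element of `√ᴿ(I)`.
Then `λ' = (λ + μ) / (1 + μ(1))` is feasible, and `ker M(λ') ⊆ ker M(λ)` since both summands
are positive semidefinite. Maximality of the rank of `M(λ)` makes the kernels equal, so
`p ∈ ker M(λ')`, i.e. `μ(p²) = 0`, a contradiction.
-/

open MvPolynomial Matrix LinearMap

theorem IsSumSq.pow {R : Type*} [CommSemiring R] {x : R} (hx : IsSumSq x) (k : ℕ) :
    IsSumSq (x ^ k) :=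
  Subsemiring.mem_sumSq.1 (pow_mem (Subsemiring.mem_sumSq.2 hx) k)

theorem isSumSq_iff_exists_sum_fin {R : Type*} [CommSemiring R] {σ : R} :
    IsSumSq σ ↔ ∃ (s : ℕ) (q : Fin s → R), σ = ∑ j, q j ^ 2 := by
  refine ⟨fun h => ?_, fun ⟨s, q, hσ⟩ => hσ ▸ IsSumSq.sum_sq _ q⟩
  induction h with
  | zero => exact ⟨0, ![], by simp⟩
  | sq_add a _ ih =>
    obtain ⟨s, q, rfl⟩ := ih
    exact ⟨s + 1, Fin.cons a q, by simp [Fin.sum_univ_succ, sq]⟩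

theorem IsSumSq.exists_add_pow_eq {R : Type*} [CommSemiring R] {x y : R} (hx : IsSumSq x)
    (hy : IsSumSq y) (N : ℕ) : ∃ σ, IsSumSq σ ∧ (x + y) ^ N = x ^ N + σ := by
  refine ⟨∑ k ∈ Finset.range N, x ^ k * y ^ (N - k) * N.choose k,
    IsSumSq.sum fun k _ => ((hx.pow k).mul (hy.pow _)).mul (.natCast _), ?_⟩
  rw [add_pow, Finset.sum_range_succ, Nat.sub_self, pow_zero, Nat.choose_self, Nat.cast_one,
    mul_one, mul_one, add_comm]

namespace Ideal

variable {R : Type*} [CommRing R] (I : Ideal R)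

/-- `x ≤ 0` modulo `I` for the sums-of-squares preorder. -/
def sumSqNonpos : AddSubmonoid R where
  carrier := {x | ∃ σ, IsSumSq σ ∧ x + σ ∈ I}
  zero_mem' := ⟨0, .zero, by simp⟩
  add_mem' := by
    rintro x y ⟨σ, hσ, hx⟩ ⟨τ, hτ, hy⟩
    exact ⟨σ + τ, hσ.add hτ, by convert I.add_mem hx hy using 1; ring⟩

variable {I} {x s : R}

theorem mem_sumSqNonpos_of_mem (hx : x ∈ I) : x ∈ I.sumSqNonpos :=
  ⟨0, .zero, by simpa⟩

theorem mul_mem_sumSqNonpos (hs : IsSumSq s) (hx : x ∈ I.sumSqNonpos) :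
    s * x ∈ I.sumSqNonpos := by
  obtain ⟨σ, hσ, hxσ⟩ := hx
  exact ⟨s * σ, hs.mul hσ, by simpa [mul_add] using I.mul_mem_left s hxσ⟩

theorem mem_sumSqNonpos_of_add_mem (hs : IsSumSq s) (h : x + s ∈ I.sumSqNonpos) :
    x ∈ I.sumSqNonpos := by
  obtain ⟨σ, hσ, hxσ⟩ := h
  exact ⟨s + σ, hs.add hσ, by rwa [← add_assoc]⟩

theorem add_pow_mem_sumSqNonpos {u v : R} (hu : IsSumSq u) (hv : IsSumSq v) {s t : ℕ}
    (hus : u ^ s ∈ I.sumSqNonpos) (hvt : v ^ t ∈ I.sumSqNonpos) :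
    (u + v) ^ (s + t) ∈ I.sumSqNonpos := by
  rw [add_pow]
  refine AddSubmonoid.sum_mem _ fun k hk => ?_
  rcases le_or_gt s k with hsk | hks
  · obtain ⟨j, rfl⟩ := Nat.exists_eq_add_of_le hsk
    rw [pow_add, show u ^ s * u ^ j * v ^ (s + t - (s + j)) * ((s + t).choose (s + j) : R) =
      (u ^ j * v ^ (s + t - (s + j)) * (s + t).choose (s + j)) * u ^ s by ring]
    exact mul_mem_sumSqNonpos (((hu.pow _).mul (hv.pow _)).mul (.natCast _)) hus
  · rw [show s + t - k = s - k + t by omega, pow_add,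
      show u ^ k * (v ^ (s - k) * v ^ t) * ((s + t).choose k : R) =
        (u ^ k * v ^ (s - k) * (s + t).choose k) * v ^ t by ring]
    exact mul_mem_sumSqNonpos (((hu.pow _).mul (hv.pow _)).mul (.natCast _)) hvt

end Ideal

section RealRadical

variable {n : ℕ} {I : Ideal (MvPolynomial (Fin n) ℝ)}

theorem mem_realRadical_iff {f : MvPolynomial (Fin n) ℝ} :
    f ∈ realRadical I ↔ ∃ t, 1 ≤ t ∧ f ^ (2 * t) ∈ I.sumSqNonpos := by
  constructor
  · rintro ⟨t, ht, s, q, h⟩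
    exact ⟨t, ht, _, IsSumSq.sum_sq _ q, h⟩
  · rintro ⟨t, ht, σ, hσ, h⟩
    obtain ⟨s, q, rfl⟩ := isSumSq_iff_exists_sum_fin.1 hσ
    exact ⟨t, ht, s, q, h⟩

theorem mem_realRadical_of_mem {f : MvPolynomial (Fin n) ℝ} (hf : f ∈ I) : f ∈ realRadical I :=
  mem_realRadical_iff.2 ⟨1, le_rfl, Ideal.mem_sumSqNonpos_of_mem (I.pow_mem_of_mem hf _ two_pos)⟩

theorem mul_mem_realRadical_left (g : MvPolynomial (Fin n) ℝ) {f : MvPolynomial (Fin n) ℝ}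
    (hf : f ∈ realRadical I) : g * f ∈ realRadical I := by
  obtain ⟨t, ht, hft⟩ := mem_realRadical_iff.1 hf
  refine mem_realRadical_iff.2 ⟨t, ht, ?_⟩
  rw [mul_pow]
  exact Ideal.mul_mem_sumSqNonpos ((even_two_mul t).isSquare_pow g).isSumSq hft

theorem add_mem_realRadical {a b : MvPolynomial (Fin n) ℝ} (ha : a ∈ realRadical I)
    (hb : b ∈ realRadical I) : a + b ∈ realRadical I := by
  obtain ⟨s, hs, has⟩ := mem_realRadical_iff.1 ha
  obtain ⟨t, -, hbt⟩ := mem_realRadical_iff.1 hb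
  have hsq : ∀ c : MvPolynomial (Fin n) ℝ, IsSumSq (2 * c ^ 2) := fun c =>
    (IsSumSq.natCast 2).mul (IsSquare.sq c).isSumSq
  have hpow : ∀ (c : MvPolynomial (Fin n) ℝ) (r : ℕ), c ^ (2 * r) ∈ I.sumSqNonpos →
      (2 * c ^ 2) ^ r ∈ I.sumSqNonpos := fun c r hc => by
    rw [mul_pow, ← pow_mul]
    exact Ideal.mul_mem_sumSqNonpos ((IsSumSq.natCast 2).pow r) hc
  -- `(a + b) ^ (2 (s + t))` is at most `((a + b)² + (a - b)²) ^ (s + t) = (2a² + 2b²) ^ (s + t)`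
  -- modulo sums of squares.
  obtain ⟨σ, hσ, hexp⟩ :=
    IsSumSq.exists_add_pow_eq (IsSquare.sq (a + b)).isSumSq (IsSquare.sq (a - b)).isSumSq (s + t)
  refine mem_realRadical_iff.2 ⟨s + t, by omega, Ideal.mem_sumSqNonpos_of_add_mem hσ ?_⟩
  rw [pow_mul, ← hexp, show (a + b) ^ 2 + (a - b) ^ 2 = 2 * a ^ 2 + 2 * b ^ 2 by ring]
  exact Ideal.add_pow_mem_sumSqNonpos (hsq a) (hsq b) (hpow a s has) (hpow b t hbt)

def realRadicalIdeal (I : Ideal (MvPolynomial (Fin n) ℝ)) : Ideal (MvPolynomial (Fin n) ℝ) where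
  carrier := realRadical I
  zero_mem' := mem_realRadical_of_mem I.zero_mem
  add_mem' := add_mem_realRadical
  smul_mem' := mul_mem_realRadical_left

theorem mem_realRadical_of_sq_add_mem {g σ : MvPolynomial (Fin n) ℝ} (hσ : IsSumSq σ)
    (h : g ^ 2 + σ ∈ realRadical I) : g ∈ realRadical I := by
  obtain ⟨t, ht, hgt⟩ := mem_realRadical_iff.1 h
  obtain ⟨τ, hτ, hexp⟩ := IsSumSq.exists_add_pow_eq (IsSquare.sq g).isSumSq hσ (2 * t)
  refine mem_realRadical_iff.2 ⟨2 * t, by omega, Ideal.mem_sumSqNonpos_of_add_mem hτ ?_⟩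
  rwa [pow_mul, ← hexp]

theorem mem_realRadical_of_sum_sq_mem {ι : Type*} {s : Finset ι} {g : ι → MvPolynomial (Fin n) ℝ}
    (h : ∑ i ∈ s, g i ^ 2 ∈ realRadical I) {i : ι} (hi : i ∈ s) : g i ∈ realRadical I := by
  classical
  exact mem_realRadical_of_sq_add_mem (IsSumSq.sum_sq (s.erase i) g)
    (by rwa [Finset.add_sum_erase s (fun i => g i ^ 2) hi])

end RealRadical

theorem Submodule.exists_fin_family_sum_smul_compl {K M : Type*} [Field K] [AddCommGroup M]
    [Module K M] (V W : Submodule K M) [FiniteDimensional K V] :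
    ∃ (k : ℕ) (c : Fin k → M), (∀ v : Fin k → K, ∑ i, v i • c i ∈ W → v = 0) ∧
      ∀ q ∈ V, ∃ v : Fin k → K, q - ∑ i, v i • c i ∈ W := by
  obtain ⟨B, hB⟩ := (W.comap V.subtype).exists_isCompl
  let b := Module.finBasis K B
  have hsum : ∀ v : Fin _ → K, ∑ i, v i • ((b i : V) : M) = (((∑ i, v i • b i : B) : V) : M) := by
    simp
  refine ⟨_, fun i => ((b i : V) : M), fun v hv => ?_, fun q hq => ?_⟩
  · rw [hsum] at hv
    have hmem : ((∑ i, v i • b i : B) : V) ∈ W.comap V.subtype ⊓ B := ⟨hv, Submodule.coe_mem _⟩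
    rw [hB.inf_eq_bot, Submodule.mem_bot, Submodule.coe_eq_zero] at hmem
    exact funext (Fintype.linearIndependent_iff.1 b.linearIndependent v hmem)
  · have hq' : (⟨q, hq⟩ : V) ∈ W.comap V.subtype ⊔ B := hB.sup_eq_top ▸ Submodule.mem_top
    obtain ⟨w, hw, x, hx, hwx⟩ := Submodule.mem_sup.1 hq'
    refine ⟨b.repr ⟨x, hx⟩, ?_⟩
    have hqwx : q = (w : M) + x := congrArg Subtype.val hwx.symm
    rw [hsum, b.sum_repr, hqwx]
    simpa using hw

theorem LinearMap.exists_dual_comp_eq_of_comap_le_ker {K V W : Type*} [Field K] [AddCommGroup V]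
    [Module K V] [AddCommGroup W] [Module K W] (Φ : V →ₗ[K] W) (J : Submodule K W)
    (f : Module.Dual K V) (h : J.comap Φ ≤ ker f) :
    ∃ μ : Module.Dual K W, J ≤ ker μ ∧ μ ∘ₗ Φ = f := by
  have hf : f ∈ range (J.mkQ ∘ₗ Φ).dualMap := by
    rw [range_dualMap_eq_dualAnnihilator_ker, Submodule.mem_dualAnnihilator, ker_comp,
      Submodule.ker_mkQ]
    exact fun w hw => h hw
  obtain ⟨g, hg⟩ := hf
  exact ⟨g ∘ₗ J.mkQ, fun x hx => by simp [(Submodule.Quotient.mk_eq_zero J).2 hx], hg⟩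

theorem LinearMap.ker_eq_of_ker_le_of_finrank_range_le {K V W₁ W₂ : Type*} [DivisionRing K]
    [AddCommGroup V] [Module K V] [FiniteDimensional K V] [AddCommGroup W₁] [Module K W₁]
    [AddCommGroup W₂] [Module K W₂] {f : V →ₗ[K] W₁} {g : V →ₗ[K] W₂} (hker : ker f ≤ ker g)
    (hrank : Module.finrank K (range f) ≤ Module.finrank K (range g)) : ker f = ker g :=
  Submodule.eq_of_le_of_finrank_le hker (by
    have := f.finrank_range_add_finrank_ker
    have := g.finrank_range_add_finrank_ker
    omega)

theorem exists_strongDual_pos_of_disjoint {E : Type*} [AddCommGroup E] [Module ℝ E]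
    [TopologicalSpace E] [IsTopologicalAddGroup E] [ContinuousSMul ℝ E] [LocallyConvexSpace ℝ E]
    {Z : Set E} (hZc : Convex ℝ Z) (hZ : IsCompact Z) {L : Submodule ℝ E}
    (hL : IsClosed (L : Set E)) (hZL : Disjoint Z L) :
    ∃ f : StrongDual ℝ E, (∀ x ∈ L, f x = 0) ∧ ∀ z ∈ Z, 0 < f z := by
  obtain ⟨f, u, v, hfu, huv, hvf⟩ := geometric_hahn_banach_compact_closed hZc hZ L.convex hL hZL
  -- `f` is bounded below on the subspace `L`, hence vanishes there.
  have hfL : ∀ x ∈ L, f x = 0 := fun x hx => by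
    by_contra hfx
    have := hvf _ (L.smul_mem ((v - 1) / f x) hx)
    rw [map_smul, smul_eq_mul, div_mul_cancel₀ _ hfx] at this
    linarith
  refine ⟨-f, fun x hx => by simp [hfL x hx], fun z hz => ?_⟩
  have := hvf 0 L.zero_mem
  rw [map_zero] at this
  rw [_root_.neg_apply]
  linarith [hfu z hz]

namespace Matrix

variable {ι : Type*} [Fintype ι]

theorem PosSemidef.abs_apply_le_trace {A : Matrix ι ι ℝ} (hA : A.PosSemidef) (i j : ι) :
    |A i j| ≤ A.trace := by
  classical
  have hdiag : ∀ k, A k k ≤ A.trace := fun k =>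
    Finset.single_le_sum (f := A.diag) (fun _ _ => hA.diag_nonneg) (Finset.mem_univ k)
  have hsym : A j i = A i j := by simpa using hA.isHermitian.apply i j
  have hform : ∀ s : ℝ, 0 ≤ A i i + 2 * s * A i j + s ^ 2 * A j j := fun s => by
    have := hA.dotProduct_mulVec_nonneg (Pi.single i 1 + s • Pi.single j 1)
    simp only [star_trivial, mulVec_add, mulVec_single, MulOpposite.op_one, one_smul, mulVec_smul,
      dotProduct_add, add_dotProduct, single_dotProduct, col_apply, one_mul, smul_dotProduct, hsym,
      smul_eq_mul, dotProduct_smul] at this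
    linarith
  have h₁ := hform 1
  have h₂ := hform (-1)
  rw [abs_le]
  constructor <;> nlinarith [hdiag i, hdiag j]

theorem isClosed_setOf_posSemidef : IsClosed {A : Matrix ι ι ℝ | A.PosSemidef} := by
  simp only [posSemidef_iff_dotProduct_mulVec, Set.ofPred_and, Set.ofPred_forall]
  exact (isClosed_eq continuous_id.matrix_conjTranspose continuous_id).inter
    (isClosed_iInter fun x => isClosed_le continuous_const
      (continuous_const.dotProduct (continuous_id.matrix_mulVec continuous_const)))

theorem isCompact_setOf_posSemidef_trace_eq_one :
    IsCompact {A : Matrix ι ι ℝ | A.PosSemidef ∧ A.trace = 1} := by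
  have hbox := isCompact_univ_pi fun (_ : ι) => isCompact_univ_pi fun (_ : ι) =>
    isCompact_Icc (a := (-1 : ℝ)) (b := 1)
  refine hbox.of_isClosed_subset (isClosed_setOf_posSemidef.inter (isClosed_eq continuous_id.matrix_trace continuous_const))
    fun A ⟨hA, htr⟩ => ?_
  simp only [Set.mem_pi, Set.mem_univ, forall_const]
  exact fun i j => abs_le.1 (htr ▸ hA.abs_apply_le_trace i j)

theorem exists_linearMap_pos_of_posSemidef {L : Submodule ℝ (Matrix ι ι ℝ)}
    (hL : ∀ A ∈ L, A.PosSemidef → A = 0) :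
    ∃ f : Matrix ι ι ℝ →ₗ[ℝ] ℝ, L ≤ ker f ∧ ∀ A, A.PosSemidef → A ≠ 0 → 0 < f A := by
  have : LocallyConvexSpace ℝ (Matrix ι ι ℝ) := inferInstanceAs (LocallyConvexSpace ℝ (ι → ι → ℝ))
  have hZc : Convex ℝ {A : Matrix ι ι ℝ | A.PosSemidef ∧ A.trace = 1} :=
    fun A hA B hB a b ha hb hab =>
      ⟨(hA.1.smul ha).add (hB.1.smul hb), by simp [trace_add, trace_smul, hA.2, hB.2, hab]⟩
  have hZL : Disjoint {A : Matrix ι ι ℝ | A.PosSemidef ∧ A.trace = 1} L :=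
    Set.disjoint_left.2 fun A hAZ hAL => by simpa [hL A hAL hAZ.1] using hAZ.2
  obtain ⟨f, hfL, hfZ⟩ := exists_strongDual_pos_of_disjoint hZc
    isCompact_setOf_posSemidef_trace_eq_one (Submodule.closed_of_finiteDimensional L) hZL
  refine ⟨f, fun A hA => hfL A hA, fun A hA hA0 => ?_⟩
  have htr : 0 < A.trace := hA.trace_nonneg.lt_of_ne' fun h => hA0 (hA.trace_eq_zero_iff.1 h)
  have := hfZ (A.trace⁻¹ • A) ⟨hA.smul (inv_nonneg.2 htr.le), by
    rw [trace_smul, smul_eq_mul, inv_mul_cancel₀ htr.ne']⟩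
  rw [map_smul, smul_eq_mul] at this
  exact pos_of_mul_pos_right this (inv_nonneg.2 htr.le)

end Matrix

section Gram

variable {ι R : Type*} [Fintype ι] [CommRing R] [Algebra ℝ R]

def gramMap (c : ι → R) : Matrix ι ι ℝ →ₗ[ℝ] R where
  toFun A := ∑ i, ∑ j, A i j • (c i * c j)
  map_add' A B := by simp [add_smul, Finset.sum_add_distrib]
  map_smul' r A := by simp [Finset.smul_sum, smul_smul]

theorem gramMap_vecMulVec (c : ι → R) (v : ι → ℝ) :
    gramMap c (vecMulVec v v) = (∑ i, v i • c i) ^ 2 := by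
  simp only [gramMap, LinearMap.coe_mk, AddHom.coe_mk, vecMulVec_apply, sq, Finset.sum_mul_sum,
    smul_mul_smul_comm]

theorem gramMap_conjTranspose_mul_self {κ : Type*} [Fintype κ] (c : ι → R) (B : Matrix κ ι ℝ) :
    gramMap c (Bᴴ * B) = ∑ m, (∑ i, B m i • c i) ^ 2 := by
  simp_rw [← gramMap_vecMulVec, ← map_sum]
  congr 1
  ext i j
  simp [mul_apply, vecMulVec_apply, Matrix.sum_apply]

open scoped MatrixOrder in
theorem exists_linearMap_pos_sq (J : Submodule ℝ R) (c : ι → R)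
    (hJ : ∀ B : Matrix ι ι ℝ, ∑ m, (∑ i, B m i • c i) ^ 2 ∈ J → B = 0) :
    ∃ μ : R →ₗ[ℝ] ℝ, J ≤ ker μ ∧ ∀ v : ι → ℝ, v ≠ 0 → 0 < μ ((∑ i, v i • c i) ^ 2) := by
  classical
  obtain ⟨f, hfJ, hf⟩ := Matrix.exists_linearMap_pos_of_posSemidef (L := J.comap (gramMap c))
    fun A hAJ hA => by
      obtain ⟨B, rfl⟩ := CStarAlgebra.nonneg_iff_eq_star_mul_self.mp hA.nonneg
      rw [Submodule.mem_comap, star_eq_conjTranspose, gramMap_conjTranspose_mul_self] at hAJ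
      simp [hJ B hAJ]
  obtain ⟨μ, hμJ, hμf⟩ := exists_dual_comp_eq_of_comap_le_ker (gramMap c) J f hfJ
  refine ⟨μ, hμJ, fun v hv => ?_⟩
  rw [← gramMap_vecMulVec, ← LinearMap.comp_apply, hμf]
  simpa using hf _ (posSemidef_vecMulVec_self_star v) (vecMulVec_ne_zero hv (by simpa using hv))

end Gram

section MomentMatrix

variable {n d : ℕ}

/-- Positive semidefiniteness of the truncated moment matrix `M(λ)` of level `d`. -/
def MomentPosSemidef (d : ℕ) (l : MvPolynomial (Fin n) ℝ →ₗ[ℝ] ℝ) : Prop :=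
  ∀ p : MvPolynomial (Fin n) ℝ, p.totalDegree ≤ d → 0 ≤ l (p * p)

theorem MomentPosSemidef.smul_add {l μ : MvPolynomial (Fin n) ℝ →ₗ[ℝ] ℝ}
    (hl : MomentPosSemidef d l) (hμ : MomentPosSemidef d μ) {c : ℝ} (hc : 0 ≤ c) :
    MomentPosSemidef d (c • (l + μ)) := fun p hp =>
  mul_nonneg hc (add_nonneg (hl p hp) (hμ p hp))

theorem map_mul_eq_zero_of_forall_monomial (l : MvPolynomial (Fin n) ℝ →ₗ[ℝ] ℝ)
    {g q : MvPolynomial (Fin n) ℝ} (hg : g.totalDegree ≤ d)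
    (h : ∀ α : Fin n →₀ ℕ, (α.sum fun _ e => e) ≤ d → l (monomial α 1 * q) = 0) :
    l (g * q) = 0 := by
  conv_lhs => rw [g.as_sum]
  rw [Finset.sum_mul, map_sum]
  refine Finset.sum_eq_zero fun α hα => ?_
  rw [show monomial α (coeff α g) * q = coeff α g • (monomial α 1 * q) by
      rw [smul_eq_C_mul, ← mul_assoc, C_mul_monomial, mul_one],
    map_smul, h α ((le_totalDegree hα).trans hg), smul_zero]

theorem MomentPosSemidef.map_mul_eq_zero {l : MvPolynomial (Fin n) ℝ →ₗ[ℝ] ℝ}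
    (hl : MomentPosSemidef d l) {g q : MvPolynomial (Fin n) ℝ} (hg : g.totalDegree ≤ d)
    (hq : q.totalDegree ≤ d) (hqq : l (q * q) = 0) : l (g * q) = 0 := by
  have key : ∀ t : ℝ, 0 ≤ l (g * g) + 2 * t * l (g * q) := fun t => by
    have := hl (g + t • q) ((totalDegree_add _ _).trans
      (max_le hg ((totalDegree_smul_le _ _).trans hq)))
    simp only [add_mul, mul_add, smul_mul_assoc, mul_smul_comm, map_add, map_smul, smul_eq_mul,
      hqq, mul_comm q g] at this
    linarith
  by_contra h
  have := key (-(l (g * g) + 1) / (2 * l (g * q)))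
  rw [show 2 * (-(l (g * g) + 1) / (2 * l (g * q))) * l (g * q) = -(l (g * g) + 1) by
    field_simp] at this
  linarith

theorem momentMap_eq_zero_iff {l : MvPolynomial (Fin n) ℝ →ₗ[ℝ] ℝ} (hl : MomentPosSemidef d l)
    (Q : restrictTotalDegree (Fin n) ℝ d) : momentMap n d l Q = 0 ↔ l (Q * Q) = 0 := by
  have hQ : (Q : MvPolynomial (Fin n) ℝ).totalDegree ≤ d := (mem_restrictTotalDegree _ _ _).1 Q.2
  refine ⟨fun h => map_mul_eq_zero_of_forall_monomial l hQ fun α hα => ?_, fun h => ?_⟩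
  · simpa [momentMap, hα] using congrFun h α
  · funext α
    by_cases hα : (α.sum fun _ e => e) ≤ d
    · simpa [momentMap, hα] using
        hl.map_mul_eq_zero (by rwa [totalDegree_monomial _ one_ne_zero]) hQ h
    · simp [momentMap, hα]

theorem ker_momentMap_smul_add_le {l μ : MvPolynomial (Fin n) ℝ →ₗ[ℝ] ℝ}
    (hl : MomentPosSemidef d l) (hμ : MomentPosSemidef d μ) {c : ℝ} (hc : 0 < c) :
    ker (momentMap n d (c • (l + μ))) ≤ ker (momentMap n d l) := fun Q hQ => by
  have hQd : (Q : MvPolynomial (Fin n) ℝ).totalDegree ≤ d := (mem_restrictTotalDegree _ _ _).1 Q.2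
  rw [mem_ker, momentMap_eq_zero_iff (hl.smul_add hμ hc.le)] at hQ
  rw [mem_ker, momentMap_eq_zero_iff hl]
  simp only [LinearMap.smul_apply, LinearMap.add_apply, smul_eq_mul, mul_eq_zero, hc.ne',
    false_or] at hQ
  linarith [hl _ hQd, hμ _ hQd]

end MomentMatrix

theorem exists_functional_pos_of_notMem_realRadical {n d : ℕ}
    {I : Ideal (MvPolynomial (Fin n) ℝ)} {p : MvPolynomial (Fin n) ℝ}
    (hp : p.totalDegree ≤ d) (hpI : p ∉ realRadical I) :
    ∃ μ : MvPolynomial (Fin n) ℝ →ₗ[ℝ] ℝ, (∀ g ∈ realRadical I, μ g = 0) ∧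
      MomentPosSemidef d μ ∧ 0 < μ (p * p) := by
  set J := (realRadicalIdeal I).restrictScalars ℝ
  obtain ⟨k, c, hc, hspan⟩ :=
    Submodule.exists_fin_family_sum_smul_compl (restrictTotalDegree (Fin n) ℝ d) J
  obtain ⟨μ, hμJ, hμ⟩ := exists_linearMap_pos_sq J c fun B hB =>
    funext fun m => hc (B m) (mem_realRadical_of_sum_sq_mem hB (Finset.mem_univ m))
  have hreduce : ∀ q : MvPolynomial (Fin n) ℝ, q.totalDegree ≤ d → ∃ v : Fin k → ℝ,
      μ (q * q) = μ ((∑ i, v i • c i) ^ 2) ∧ q - ∑ i, v i • c i ∈ realRadical I := by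
    intro q hq
    obtain ⟨v, hv⟩ := hspan q ((mem_restrictTotalDegree _ _ _).2 hq)
    refine ⟨v, ?_, hv⟩
    rw [← sub_eq_zero, ← map_sub, show q * q - (∑ i, v i • c i) ^ 2 =
      (q - ∑ i, v i • c i) * (q + ∑ i, v i • c i) by ring]
    exact hμJ ((realRadicalIdeal I).mul_mem_right _ hv)
  refine ⟨μ, fun g hg => hμJ hg, fun q hq => ?_, ?_⟩
  · obtain ⟨v, hμq, -⟩ := hreduce q hq
    rcases eq_or_ne v 0 with rfl | hv
    · simp [hμq]
    · exact hμq ▸ (hμ v hv).le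
  · obtain ⟨v, hμp, hv⟩ := hreduce p hp
    exact hμp ▸ hμ v fun hv0 => hpI (by simpa [hv0] using hv)

theorem kernel_of_max_rank_moment_matrix_subset_realRadical_general
    (n m d : ℕ) (f : Fin m → MvPolynomial (Fin n) ℝ)
    (l : MvPolynomial (Fin n) ℝ →ₗ[ℝ] ℝ) (hl1 : l 1 = 1)
    (hpsd : ∀ p : MvPolynomial (Fin n) ℝ, p.totalDegree ≤ d → 0 ≤ l (p * p))
    (hkerf : ∀ i, ∀ α : Fin n →₀ ℕ, (α.sum fun _ e => e) ≤ d →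
      l (MvPolynomial.monomial α 1 * f i) = 0)
    (hmax : ∀ l' : MvPolynomial (Fin n) ℝ →ₗ[ℝ] ℝ, l' 1 = 1 →
      (∀ p : MvPolynomial (Fin n) ℝ, p.totalDegree ≤ d → 0 ≤ l' (p * p)) →
      (∀ i, ∀ α : Fin n →₀ ℕ, (α.sum fun _ e => e) ≤ d →
        l' (MvPolynomial.monomial α 1 * f i) = 0) →
      momentRank n d l' ≤ momentRank n d l) :
    ∀ p : MvPolynomial (Fin n) ℝ, p.totalDegree ≤ d →
      (∀ α : Fin n →₀ ℕ, (α.sum fun _ e => e) ≤ d →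
        l (MvPolynomial.monomial α 1 * p) = 0) →
      p ∈ realRadical (Ideal.span (Set.range f)) := by
  intro p hp hpker
  by_contra hpI
  obtain ⟨μ, hμI, hμpsd, hμp⟩ := exists_functional_pos_of_notMem_realRadical hp hpI
  have hc : 0 < 1 + μ 1 := by linarith [show 0 ≤ μ 1 by simpa using hμpsd 1 (by simp)]
  set l' := (1 + μ 1)⁻¹ • (l + μ)
  have hl'psd : MomentPosSemidef d l' := MomentPosSemidef.smul_add hpsd hμpsd (inv_pos.2 hc).le
  have hl'f : ∀ i, ∀ α : Fin n →₀ ℕ, (α.sum fun _ e => e) ≤ d → l' (monomial α 1 * f i) = 0 :=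
    fun i α hα => by
      simp [l', hkerf i α hα, hμI _ (mem_realRadical_of_mem
        (Ideal.mul_mem_left _ _ (Ideal.subset_span ⟨i, rfl⟩)))]
  have hker : ker (momentMap n d l') = ker (momentMap n d l) :=
    ker_eq_of_ker_le_of_finrank_range_le (ker_momentMap_smul_add_le hpsd hμpsd (inv_pos.2 hc))
      (hmax l' (by simpa [l', hl1, mul_add] using inv_mul_cancel₀ hc.ne') hl'psd hl'f)
  have hP : (⟨p, (mem_restrictTotalDegree _ _ _).2 hp⟩ : restrictTotalDegree (Fin n) ℝ d) ∈
      ker (momentMap n d l) :=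
    (momentMap_eq_zero_iff hpsd _).2 (map_mul_eq_zero_of_forall_monomial l hp hpker)
  rw [← hker, mem_ker, momentMap_eq_zero_iff hl'psd] at hP
  simp only [l', LinearMap.smul_apply, LinearMap.add_apply, smul_eq_mul, mul_eq_zero,
    (inv_pos.2 hc).ne', false_or, map_mul_eq_zero_of_forall_monomial l hp hpker, zero_add] at hP
  exact hμp.ne' hP

/-- If `λ(1) = 1`, the truncated moment matrix `M(λ)` of level `d` is
positive semidefinite and kills each generator `fᵢ` (of degree `≤ d`) of the ideal `I`,
and `M(λ)` has maximum rank among all such moment matrices, then every polynomial in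
`ℙ(ker M(λ))` belongs to the real radical of `I`. -/
theorem kernel_of_max_rank_moment_matrix_subset_realRadical
    (n m d : ℕ) (f : Fin m → MvPolynomial (Fin n) ℝ)
    (hdeg : ∀ i, (f i).totalDegree ≤ d)
    (l : MvPolynomial (Fin n) ℝ →ₗ[ℝ] ℝ) (hl1 : l 1 = 1)
    (hpsd : ∀ p : MvPolynomial (Fin n) ℝ, p.totalDegree ≤ d → 0 ≤ l (p * p))
    (hkerf : ∀ i, ∀ α : Fin n →₀ ℕ, (α.sum fun _ e => e) ≤ d →
      l (MvPolynomial.monomial α 1 * f i) = 0)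
    (hmax : ∀ l' : MvPolynomial (Fin n) ℝ →ₗ[ℝ] ℝ, l' 1 = 1 →
      (∀ p : MvPolynomial (Fin n) ℝ, p.totalDegree ≤ d → 0 ≤ l' (p * p)) →
      (∀ i, ∀ α : Fin n →₀ ℕ, (α.sum fun _ e => e) ≤ d →
        l' (MvPolynomial.monomial α 1 * f i) = 0) →
      momentRank n d l' ≤ momentRank n d l) :
    ∀ p : MvPolynomial (Fin n) ℝ, p.totalDegree ≤ d →
      (∀ α : Fin n →₀ ℕ, (α.sum fun _ e => e) ≤ d →
        l (MvPolynomial.monomial α 1 * p) = 0) →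
      p ∈ realRadical (Ideal.span (Set.range f)) :=
  kernel_of_max_rank_moment_matrix_subset_realRadical_general n m d f l hl1 hpsd hkerf hmax
end

section
/- Let λ : ℝ[x]_{≤2d} → ℝ be a linear functional whose truncated moment matrix M(λ) is positive semidefinite. Let m ≥ 1 be an integer and p, q_1,…,q_s ∈ ℝ[x] with 2m·deg(p) ≤ d and 2·deg(q_j) ≤ d for each j, and set f := p^{2m} + Σ_{j=1}^s q_j² (so deg f ≤ d). If M(λ)·vec(f) = 0, then M(λ)·vec(p) = 0. -/
open MvPolynomial

/-!
Write `⟨a, b⟩ := l (a * b)`; positive semidefiniteness of `M(λ)` says this form is positive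
semidefinite on polynomials of degree `≤ d`, so by Cauchy–Schwarz `⟨a, a⟩ = 0` forces
`⟨a, b⟩ = 0` for every `b` of degree `≤ d`. Since `f` is a sum of squares, `l f = 0` gives
`⟨p ^ m, p ^ m⟩ = 0`. Cauchy–Schwarz with `a = p ^ (k + 1)`, `b = p ^ (k - 1)` then lowers the
exponent one step at a time down to `⟨p, p⟩ = 0`, and a last application with `b = x ^ α`
gives the claim.
-/

section PositiveSemidefinite

variable {𝕜 A : Type*} [Field 𝕜] [LinearOrder 𝕜] [IsStrictOrderedRing 𝕜] [CommRing A]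
  [Algebra 𝕜 A] {l : A →ₗ[𝕜] 𝕜} {V : Submodule 𝕜 A}

theorem map_mul_eq_zero_of_map_mul_self_eq_zero (hpsd : ∀ a ∈ V, 0 ≤ l (a * a)) {a b : A}
    (ha : a ∈ V) (hb : b ∈ V) (h : l (a * a) = 0) : l (a * b) = 0 := by
  have hquad : ∀ t : 𝕜, 0 ≤ 0 * (t * t) + 2 * l (a * b) * t + l (b * b) := by
    intro t
    have hexpand :
        (t • a + b) * (t • a + b) = (t * t) • (a * a) + (2 * t) • (a * b) + b * b := by
      simp only [Algebra.smul_def, map_mul, map_ofNat]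
      ring
    have := hpsd _ (V.add_mem (V.smul_mem t ha) hb)
    rw [hexpand, map_add, map_add, map_smul, map_smul, h, smul_eq_mul, smul_eq_mul] at this
    linarith
  have hdiscrim := discrim_le_zero hquad
  rw [discrim] at hdiscrim
  nlinarith [sq_nonneg (l (a * b))]

theorem map_pow_mul_pow_eq_zero_of_le (hpsd : ∀ a ∈ V, 0 ≤ l (a * a)) {p : A} {m k : ℕ}
    (hpV : ∀ i ≤ 2 * m, p ^ i ∈ V) (h : l (p ^ m * p ^ m) = 0) (hk : 1 ≤ k)
    (hkm : k ≤ m) : l (p ^ k * p ^ k) = 0 := by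
  refine Nat.decreasingInduction' (P := fun k => l (p ^ k * p ^ k) = 0)
    (fun i him hki ih => ?_) hkm h
  have hpow : p ^ (i + 1) * p ^ (i - 1) = p ^ i * p ^ i := by
    rw [← pow_add, ← pow_add]
    congr 1
    omega
  rw [← hpow]
  exact map_mul_eq_zero_of_map_mul_self_eq_zero hpsd (hpV _ (by omega)) (hpV _ (by omega)) ih

end PositiveSemidefinite

/-- If the truncated moment matrix `M(λ)` of level `d` is positive
semidefinite and `f = p^(2m) + Σⱼ qⱼ²` (with `2m·deg p ≤ d`, `2·deg qⱼ ≤ d`, `m ≥ 1`)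
lies in the kernel of `M(λ)`, then so does `p`. -/
theorem kernel_moment_matrix_realRadical_like
    (n d : ℕ) (l : MvPolynomial (Fin n) ℝ →ₗ[ℝ] ℝ)
    (hpsd : ∀ q : MvPolynomial (Fin n) ℝ, q.totalDegree ≤ d → 0 ≤ l (q * q))
    (m : ℕ) (hm : 1 ≤ m) (s : ℕ)
    (p : MvPolynomial (Fin n) ℝ) (q : Fin s → MvPolynomial (Fin n) ℝ)
    (hp : 2 * m * p.totalDegree ≤ d) (hq : ∀ j, 2 * (q j).totalDegree ≤ d)
    (f : MvPolynomial (Fin n) ℝ) (hf : f = p ^ (2 * m) + ∑ j, q j ^ 2)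
    (hker : ∀ α : Fin n →₀ ℕ, (α.sum fun _ e => e) ≤ d →
      l (MvPolynomial.monomial α 1 * f) = 0) :
    ∀ α : Fin n →₀ ℕ, (α.sum fun _ e => e) ≤ d →
      l (MvPolynomial.monomial α 1 * p) = 0 := by
  set V := restrictTotalDegree (Fin n) ℝ d
  have hpsdV : ∀ a ∈ V, 0 ≤ l (a * a) := fun a ha =>
    hpsd a ((mem_restrictTotalDegree _ _ a).1 ha)
  have hpV : ∀ i ≤ 2 * m, p ^ i ∈ V := fun i hi => (mem_restrictTotalDegree _ _ _).2 <|
    (totalDegree_pow p i).trans <| (Nat.mul_le_mul_right _ hi).trans hp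
  have hlf : l (p ^ m * p ^ m) + ∑ j, l (q j * q j) = 0 := by
    simpa [hf, ← pow_add, ← two_mul, sq] using hker 0 (by simp)
  have hpm : l (p ^ m * p ^ m) = 0 :=
    (add_eq_zero_iff_of_nonneg (hpsdV _ (hpV m (by omega)))
      (Finset.sum_nonneg fun j _ => hpsd _ (by linarith [hq j]))).1 hlf |>.1
  have hp1 : l (p * p) = 0 := by
    simpa using map_pow_mul_pow_eq_zero_of_le hpsdV hpV hpm le_rfl hm
  intro α hα
  rw [mul_comm]
  refine map_mul_eq_zero_of_map_mul_self_eq_zero hpsdV (by simpa using hpV 1 (by omega)) ?_ hp1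
  rw [mem_restrictTotalDegree, totalDegree_monomial α one_ne_zero]
  exact hα
end

section
/- Every nonempty face F of the positive semidefinite cone S₊^k is of the form F = { U M Uᵀ : M ∈ S₊^r } for some integer 0 ≤ r ≤ k and some k×r real matrix U with orthonormal columns (the cases r = 0 and r = k giving F = {0} and F = S₊^k respectively). -/
/-!
Pick `A ∈ F` of maximal rank. For `X ∈ F` the sum `X + A` lies in `F`, so its rank is at most
that of `A`; since `ker (X + A) = ker X ∩ ker A` for positive semidefinite `X, A`, this forces
`ker A ⊆ ker X`. Writing `A = U D Uᵀ` with `U` the eigenvectors of `A` for its nonzero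
eigenvalues, every `X ∈ F` vanishes on `ker Uᵀ` and hence equals `U (Uᵀ X U) Uᵀ`. Conversely,
for `M ⪰ 0` we have `U M Uᵀ ⪯ c A` once `c` is large, so `U M Uᵀ` is a summand of `c A ∈ F` and
lies in `F` because `F` is a face.
-/

open Matrix

/-- `F` is a face of the cone `S₊^k` of `k × k` real positive semidefinite matrices:
it is a convex cone contained in `S₊^k` such that whenever `X, Y ∈ S₊^k` and
`X + Y ∈ F`, both `X ∈ F` and `Y ∈ F`. -/
def IsFaceOfPSDCone (k : ℕ) (F : Set (Matrix (Fin k) (Fin k) ℝ)) : Prop :=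
  (∀ X ∈ F, X.PosSemidef) ∧
  (∀ X ∈ F, ∀ Y ∈ F, X + Y ∈ F) ∧
  (∀ c : ℝ, 0 ≤ c → ∀ X ∈ F, c • X ∈ F) ∧
  (∀ X Y : Matrix (Fin k) (Fin k) ℝ, X.PosSemidef → Y.PosSemidef →
    X + Y ∈ F → X ∈ F ∧ Y ∈ F)

namespace Matrix

theorem exists_mem_forall_rank_le {R m n : Type*} [CommSemiring R] [StrongRankCondition R]
    [Fintype n] {s : Set (Matrix m n R)} (hs : s.Nonempty) :
    ∃ A ∈ s, ∀ X ∈ s, X.rank ≤ A.rank := by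
  have hbdd : BddAbove (rank '' s) :=
    ⟨Fintype.card n, by rintro _ ⟨X, -, rfl⟩; exact X.rank_le_card_width⟩
  obtain ⟨A, hA, hsup⟩ := Nat.sSup_mem (hs.image rank) hbdd
  exact ⟨A, hA, fun X hX => hsup ▸ le_csSup hbdd ⟨X, hX, rfl⟩⟩

theorem rank_add_finrank_ker_mulVecLin {K m n : Type*} [Field K] [Fintype n]
    (A : Matrix m n K) :
    A.rank + Module.finrank K (LinearMap.ker A.mulVecLin) = Fintype.card n := by
  rw [rank, LinearMap.finrank_range_add_finrank_ker, Module.finrank_fintype_fun_eq_card]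

theorem card_le_of_conjTranspose_mul_self_eq_one {R m n : Type*} [CommSemiring R]
    [StrongRankCondition R] [Star R] [Fintype m] [Fintype n] [DecidableEq m]
    {U : Matrix n m R} (hU : Uᴴ * U = 1) : Fintype.card m ≤ Fintype.card n :=
  calc Fintype.card m = (Uᴴ * U).rank := by rw [hU, rank_one]
    _ ≤ U.rank := rank_mul_le_right _ _
    _ ≤ Fintype.card n := rank_le_card_height U

theorem IsHermitian.eq_mul_conjTranspose_mul_mul_of_ker_le {R m n : Type*} [CommRing R]
    [StarRing R] [Fintype m] [Fintype n] [DecidableEq m] [DecidableEq n] {U : Matrix n m R}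
    {X : Matrix n n R} (hX : X.IsHermitian) (hU : Uᴴ * U = 1)
    (hker : LinearMap.ker Uᴴ.mulVecLin ≤ LinearMap.ker X.mulVecLin) :
    X = U * (Uᴴ * X * U) * Uᴴ := by
  have hUP : Uᴴ * (1 - U * Uᴴ) = 0 := by
    rw [Matrix.mul_sub, Matrix.mul_one, ← Matrix.mul_assoc, hU, Matrix.one_mul, sub_self]
  have hXP : X * (1 - U * Uᴴ) = 0 := by
    apply Matrix.toLin'.injective
    rw [Matrix.toLin'_mul, map_zero, Matrix.toLin'_apply', Matrix.toLin'_apply',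
      ← LinearMap.range_le_ker_iff]
    refine le_trans ?_ hker
    rw [LinearMap.range_le_ker_iff, ← mulVecLin_mul, hUP, mulVecLin_zero]
  have hright : X = X * U * Uᴴ := by
    rw [Matrix.mul_sub, Matrix.mul_one, sub_eq_zero] at hXP
    rw [Matrix.mul_assoc, ← hXP]
  have hleft : X = U * Uᴴ * X := by
    conv_lhs => rw [← hX.eq, hright]
    simp only [conjTranspose_mul, conjTranspose_conjTranspose, hX.eq, Matrix.mul_assoc]
  calc X = U * Uᴴ * (X * U * Uᴴ) := by rw [← hright, ← hleft]
    _ = U * (Uᴴ * X * U) * Uᴴ := by simp only [Matrix.mul_assoc]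

section RCLike

open scoped ComplexOrder

variable {𝕜 n : Type*} [RCLike 𝕜] [Fintype n]

theorem PosSemidef.ker_mulVecLin_add {A B : Matrix n n 𝕜} (hA : A.PosSemidef)
    (hB : B.PosSemidef) :
    LinearMap.ker (A + B).mulVecLin = LinearMap.ker A.mulVecLin ⊓ LinearMap.ker B.mulVecLin := by
  ext v
  simp only [Submodule.mem_inf, LinearMap.mem_ker, mulVecLin_apply, add_mulVec]
  refine ⟨fun h => ?_, fun ⟨hAv, hBv⟩ => by rw [hAv, hBv, add_zero]⟩
  have hsum : star v ⬝ᵥ A *ᵥ v + star v ⬝ᵥ B *ᵥ v = 0 := by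
    rw [← dotProduct_add, h, dotProduct_zero]
  obtain ⟨hAv, hBv⟩ := (add_eq_zero_iff_of_nonneg (hA.dotProduct_mulVec_nonneg v)
    (hB.dotProduct_mulVec_nonneg v)).mp hsum
  exact ⟨(hA.dotProduct_mulVec_zero_iff v).mp hAv, (hB.dotProduct_mulVec_zero_iff v).mp hBv⟩

theorem PosSemidef.ker_le_of_rank_add_le {A B : Matrix n n 𝕜} (hA : A.PosSemidef)
    (hB : B.PosSemidef) (hrank : (A + B).rank ≤ B.rank) :
    LinearMap.ker B.mulVecLin ≤ LinearMap.ker A.mulVecLin := by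
  have hle : LinearMap.ker (A + B).mulVecLin ≤ LinearMap.ker B.mulVecLin := by
    rw [hA.ker_mulVecLin_add hB]
    exact inf_le_right
  have heq := Submodule.eq_of_le_of_finrank_le hle (by
    have := (A + B).rank_add_finrank_ker_mulVecLin
    have := B.rank_add_finrank_ker_mulVecLin
    omega)
  rw [← heq, hA.ker_mulVecLin_add hB]
  exact inf_le_left

variable [DecidableEq n]

theorem PosSemidef.exists_eq_mul_diagonal_mul_conjTranspose {A : Matrix n n 𝕜}
    (hA : A.PosSemidef) :
    ∃ (r : ℕ) (U : Matrix n (Fin r) 𝕜) (d : Fin r → ℝ), Uᴴ * U = 1 ∧ (∀ a, 0 < d a) ∧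
      A = U * diagonal (fun a => (d a : 𝕜)) * Uᴴ := by
  obtain ⟨V, μ, hVV, hμ, hspec⟩ : ∃ (V : Matrix n n 𝕜) (μ : n → ℝ), Vᴴ * V = 1 ∧
      (∀ i, 0 ≤ μ i) ∧ A = V * diagonal (fun i => (μ i : 𝕜)) * Vᴴ :=
    ⟨_, _, (Unitary.mem_iff.mp hA.isHermitian.eigenvectorUnitary.2).1, hA.eigenvalues_nonneg,
      by
        have h := hA.isHermitian.spectral_theorem
        rwa [Unitary.conjStarAlgAut_apply] at h⟩
  let ι : Fin (Fintype.card {i // μ i ≠ 0}) → n :=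
    Subtype.val ∘ (Fintype.equivFin {i // μ i ≠ 0}).symm
  have hι : Function.Injective ι :=
    Subtype.val_injective.comp (Fintype.equivFin _).symm.injective
  have hμι : ∀ i ∉ Set.range ι, μ i = 0 := fun i hi => by
    by_contra h
    exact hi ⟨Fintype.equivFin _ ⟨i, h⟩, by simp [ι]⟩
  refine ⟨_, V.submatrix id ι, μ ∘ ι, ?_, fun a => ?_, ?_⟩
  · rw [conjTranspose_submatrix, ← submatrix_mul _ _ _ id _ Function.bijective_id, hVV,
      submatrix_one _ hι]
  · exact (hμ _).lt_of_ne' ((Fintype.equivFin _).symm a).2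
  · rw [hspec]
    ext p q
    rw [mul_apply, mul_apply]
    simp only [mul_diagonal, submatrix_apply, id, conjTranspose_apply]
    symm
    refine Fintype.sum_of_injective ι hι _ _ (fun i hi => ?_) (fun a => rfl)
    simp [hμι i hi]

theorem exists_smul_diagonal_sub_posSemidef {d : n → ℝ} (hd : ∀ i, 0 < d i)
    {M : Matrix n n 𝕜} (hM : M.IsHermitian) :
    ∃ c : ℝ, 0 ≤ c ∧ (c • diagonal (fun i => (d i : 𝕜)) - M).PosSemidef := by
  obtain ⟨δ, hδ, hδd⟩ : ∃ δ > 0, ∀ i, δ ≤ d i := by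
    cases isEmpty_or_nonempty n
    · exact ⟨1, one_pos, isEmptyElim⟩
    · obtain ⟨i₀, hi₀⟩ := Finite.exists_min d
      exact ⟨d i₀, hd i₀, hi₀⟩
  obtain ⟨t, ht, hMt⟩ : ∃ t : ℝ, 0 ≤ t ∧ (t • (1 : Matrix n n 𝕜) - M).PosSemidef := by
    obtain ⟨t, ht⟩ := (finite_real_spectrum (A := M)).bddAbove
    refine ⟨max t 0, le_max_right _ _, ?_⟩
    open scoped MatrixOrder in
    have := le_algebraMap_of_spectrum_le (fun x hx => (ht hx).trans (le_max_left t 0))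
      hM.isSelfAdjoint
    rwa [Algebra.algebraMap_eq_smul_one, Matrix.le_iff] at this
  have hD : (diagonal (fun i => (d i : 𝕜)) - δ • 1).PosSemidef := by
    rw [← diagonal_one, ← diagonal_smul, diagonal_sub, posSemidef_diagonal_iff]
    intro i
    rw [Pi.smul_apply, sub_nonneg, RCLike.real_smul_eq_coe_mul, mul_one]
    exact RCLike.ofReal_le_ofReal.mpr (hδd i)
  refine ⟨t / δ, by positivity, ?_⟩
  convert (hD.smul (div_nonneg ht hδ.le)).add hMt using 1
  rw [smul_sub, smul_smul, div_mul_cancel₀ _ hδ.ne']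
  abel

end RCLike

end Matrix

namespace IsFaceOfPSDCone

variable {k : ℕ} {F : Set (Matrix (Fin k) (Fin k) ℝ)}

theorem ker_le_of_forall_rank_le (hF : IsFaceOfPSDCone k F) {A X : Matrix (Fin k) (Fin k) ℝ}
    (hA : A ∈ F) (hmax : ∀ Y ∈ F, Y.rank ≤ A.rank) (hX : X ∈ F) :
    LinearMap.ker A.mulVecLin ≤ LinearMap.ker X.mulVecLin :=
  (hF.1 X hX).ker_le_of_rank_add_le (hF.1 A hA) (hmax _ (hF.2.1 X hX A hA))

theorem mem_of_posSemidef_smul_sub (hF : IsFaceOfPSDCone k F) {A X : Matrix (Fin k) (Fin k) ℝ}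
    {c : ℝ} (hA : A ∈ F) (hc : 0 ≤ c) (hX : X.PosSemidef) (hcX : (c • A - X).PosSemidef) :
    X ∈ F :=
  (hF.2.2.2 X _ hX hcX (by rw [add_sub_cancel]; exact hF.2.2.1 c hc A hA)).1

end IsFaceOfPSDCone

/-- Every nonempty face `F` of `S₊^k` has the form
`F = { U M Uᵀ : M ∈ S₊^r }` for some `0 ≤ r ≤ k` and some `k × r` matrix `U` with
orthonormal columns (`r = 0` gives `F = {0}`, `r = k` gives `F = S₊^k`). -/
theorem face_of_PSD_cone_structure (k : ℕ) (F : Set (Matrix (Fin k) (Fin k) ℝ))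
    (hF : IsFaceOfPSDCone k F) (hne : F.Nonempty) :
    ∃ (r : ℕ), r ≤ k ∧ ∃ U : Matrix (Fin k) (Fin r) ℝ,
      Uᵀ * U = 1 ∧
      F = {X : Matrix (Fin k) (Fin k) ℝ |
        ∃ M : Matrix (Fin r) (Fin r) ℝ, M.PosSemidef ∧ X = U * M * Uᵀ} := by
  obtain ⟨A, hAF, hAmax⟩ := exists_mem_forall_rank_le hne
  obtain ⟨r, U, d, hU, hd, hAU⟩ := (hF.1 A hAF).exists_eq_mul_diagonal_mul_conjTranspose
  have hkerU : LinearMap.ker Uᴴ.mulVecLin ≤ LinearMap.ker A.mulVecLin := by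
    rw [hAU, mulVecLin_mul]
    exact LinearMap.ker_le_ker_comp _ _
  simp only [← conjTranspose_eq_transpose_of_trivial]
  refine ⟨r, by simpa using card_le_of_conjTranspose_mul_self_eq_one hU, U, hU,
    Set.ext fun X => ⟨fun hX => ?_, ?_⟩⟩
  · have hXpsd := hF.1 X hX
    exact ⟨Uᴴ * X * U, hXpsd.conjTranspose_mul_mul_same U,
      hXpsd.isHermitian.eq_mul_conjTranspose_mul_mul_of_ker_le hU
        (hkerU.trans (hF.ker_le_of_forall_rank_le hAF hAmax hX))⟩
  · rintro ⟨M, hM, rfl⟩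
    obtain ⟨c, hc, hcM⟩ := exists_smul_diagonal_sub_posSemidef hd hM.isHermitian
    refine hF.mem_of_posSemidef_smul_sub hAF hc (hM.mul_mul_conjTranspose_same U) ?_
    have hcA : c • A - U * M * Uᴴ = U * (c • diagonal d - M) * Uᴴ := by
      rw [hAU, Matrix.mul_sub, Matrix.sub_mul, Matrix.mul_smul, Matrix.smul_mul]
      rfl
    rw [hcA]
    exact hcM.mul_mul_conjTranspose_same U
end

section
/- (Facial reduction step) Let A_1,…,A_l ∈ S^k, let 𝒜(X) = (⟨A₁,X⟩,…,⟨A_l,X⟩), let b ∈ ℝ^l, and let F be a nonempty face of S₊^k. Suppose X ∈ F satisfies 𝒜(X) = b, and suppose y ∈ ℝ^l satisfies bᵀy = 0 and Z := 𝒜*(y) = Σᵢ yᵢAᵢ ∈ F* \ F^⊥. Then ⟨Z, X⟩ = 0, so X ∈ {Z}^⊥ ∩ F; moreover {Z}^⊥ ∩ F is a proper subset of F. -/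
open Matrix

theorem Matrix.trace_sum_smul_mul {ι n R : Type*} [Fintype ι] [Fintype n] [CommSemiring R]
    (A : ι → Matrix n n R) (y : ι → R) (X : Matrix n n R) :
    ((∑ i, y i • A i) * X).trace = (fun i => (A i * X).trace) ⬝ᵥ y := by
  simp only [Finset.sum_mul, trace_sum, smul_mul_assoc, trace_smul, smul_eq_mul, dotProduct,
    mul_comm]

theorem facial_reduction_step_general (k l : ℕ)
    (A : Fin l → Matrix (Fin k) (Fin k) ℝ)
    (b : Fin l → ℝ)
    (F : Set (Matrix (Fin k) (Fin k) ℝ))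
    (X : Matrix (Fin k) (Fin k) ℝ) (hXF : X ∈ F)
    (hAX : ∀ i, (A i * X).trace = b i)
    (y : Fin l → ℝ) (hby : b ⬝ᵥ y = 0)
    (Z : Matrix (Fin k) (Fin k) ℝ) (hZ : Z = ∑ i, y i • A i)
    -- `Z ∉ F^⊥` : `Z` is not orthogonal to all of `F`
    (hZperp : ¬ (∀ Y ∈ F, (Z * Y).trace = 0)) :
    (Z * X).trace = 0 ∧
    X ∈ {Y : Matrix (Fin k) (Fin k) ℝ | (Z * Y).trace = 0} ∩ F ∧
    ({Y : Matrix (Fin k) (Fin k) ℝ | (Z * Y).trace = 0} ∩ F) ⊂ F := by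
  have hZX : (Z * X).trace = 0 := by
    rw [hZ, trace_sum_smul_mul, funext hAX, hby]
  refine ⟨hZX, ⟨hZX, hXF⟩, Set.inter_ssubset_right_iff.mpr ?_⟩
  exact fun hFsub => hZperp fun Y hY => hFsub hY

/-- facial reduction step.  Let `F` be a nonempty face of `S₊^k`,
let `X ∈ F` satisfy `𝒜(X) = b`, and let `y` satisfy `bᵀy = 0` with
`Z := 𝒜*(y) = Σᵢ yᵢ Aᵢ ∈ F* \ F^⊥`.  Then `⟨Z, X⟩ = 0`, so `X ∈ {Z}^⊥ ∩ F`;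
moreover `{Z}^⊥ ∩ F` is a proper subset of `F`. -/
theorem facial_reduction_step (k l : ℕ)
    (A : Fin l → Matrix (Fin k) (Fin k) ℝ) (hA : ∀ i, (A i).IsSymm)
    (b : Fin l → ℝ)
    (F : Set (Matrix (Fin k) (Fin k) ℝ)) (hF : IsFaceOfPSDCone k F) (hne : F.Nonempty)
    (X : Matrix (Fin k) (Fin k) ℝ) (hXF : X ∈ F)
    (hAX : ∀ i, (A i * X).trace = b i)
    (y : Fin l → ℝ) (hby : b ⬝ᵥ y = 0)
    (Z : Matrix (Fin k) (Fin k) ℝ) (hZ : Z = ∑ i, y i • A i)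
    -- `Z ∈ F*` : nonnegative trace inner product with every element of `F`
    (hZdual : ∀ Y ∈ F, 0 ≤ (Z * Y).trace)
    -- `Z ∉ F^⊥` : `Z` is not orthogonal to all of `F`
    (hZperp : ¬ (∀ Y ∈ F, (Z * Y).trace = 0)) :
    (Z * X).trace = 0 ∧
    X ∈ {Y : Matrix (Fin k) (Fin k) ℝ | (Z * Y).trace = 0} ∩ F ∧
    ({Y : Matrix (Fin k) (Fin k) ℝ | (Z * Y).trace = 0} ∩ F) ⊂ F :=
  facial_reduction_step_general k l A b F X hXF hAX y hby Z hZ hZperp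
end

section
/- (Theorem of the alternative) Let A_1,…,A_l ∈ S^k, let 𝒜(X) = (⟨A₁,X⟩,…,⟨A_l,X⟩), and let b ∈ ℝ^l. Assume the feasible set F_P = { X ∈ S^k : 𝒜(X) = b, X ⪰ 0 } is nonempty. Then exactly one of the following two systems is consistent: (I) there exists P ≻ 0 (positive definite) with 𝒜(P) = b (the Slater condition); (II) there exists y ∈ ℝ^l with bᵀy = 0 such that Z := 𝒜*(y) = Σᵢ yᵢAᵢ is positive semidefinite and Z ≠ 0. -/
/-!
If a positive definite `P` is feasible and `Z = ∑ yᵢ Aᵢ ⪰ 0` with `bᵀy = 0`, then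
`tr (Z P) = bᵀy = 0`, which forces `Z = 0`. Conversely, if no feasible point is positive definite,
the affine space `{X : 𝒜(X) = b}` misses the open convex cone of matrices with positive definite
quadratic form, and Hahn–Banach separates them by a functional `f`. Since `f` is bounded on the
affine space, it vanishes on `ker 𝒜`, hence `-f = tr ((∑ yᵢ Aᵢ) · )` for some `y`; the cone side of
the separation makes `∑ yᵢ Aᵢ` positive semidefinite and nonzero, and evaluating at a feasible
`X₀ ⪰ 0` gives `bᵀy = 0`.
-/

open Matrix

theorem nonpos_of_forall_pos_mul_lt {a c : ℝ} (h : ∀ t > 0, t * a < c) : a ≤ 0 := by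
  by_contra! ha
  have := h ((|c| + 1) / a) (by positivity)
  rw [div_mul_cancel₀ _ ha.ne'] at this
  linarith [le_abs_self c]

namespace Matrix

variable {n : Type*} [Fintype n]

open scoped ComplexOrder MatrixOrder in
theorem PosSemidef.eq_zero_of_trace_mul_posDef_eq_zero {𝕜 : Type*} [RCLike 𝕜]
    {Z P : Matrix n n 𝕜} (hZ : Z.PosSemidef) (hP : P.PosDef) (h : (Z * P).trace = 0) :
    Z = 0 := by
  classical
  set R := CFC.sqrt P
  have hRR : R * R = P := CFC.sqrt_mul_sqrt_self P hP.posSemidef.nonneg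
  have hR : Rᴴ = R := (CFC.sqrt_nonneg P).posSemidef.1.eq
  have hRunit : IsUnit R := isUnit_of_mul_isUnit_left (hRR.symm ▸ hP.isUnit)
  have hconj : (Rᴴ * Z * R).trace = 0 := by
    rw [hR, trace_mul_cycle, hRR, trace_mul_comm, h]
  have := (hZ.conjTranspose_mul_mul_same R).trace_eq_zero_iff.1 hconj
  rwa [hR, mul_assoc, hRunit.mul_right_eq_zero, hRunit.mul_left_eq_zero] at this

section CommRing

variable {R : Type*} [CommRing R]

theorem trace_sum_smul_mul_s10 {ι : Type*} [Fintype ι] (y : ι → R) (A : ι → Matrix n n R)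
    (X : Matrix n n R) : ((∑ i, y i • A i) * X).trace = ∑ i, y i * (A i * X).trace := by
  simp [Finset.sum_mul, trace_sum, smul_mul_assoc]

theorem dotProduct_mulVec_eq_trace_mul_vecMulVec (M : Matrix n n R) (x : n → R) :
    x ⬝ᵥ M *ᵥ x = (M * vecMulVec x x).trace := by
  rw [mul_vecMulVec, trace_vecMulVec, dotProduct_comm]

theorem IsSymm.trace_mul_transpose {A : Matrix n n R} (hA : A.IsSymm) (M : Matrix n n R) :
    (A * Mᵀ).trace = (A * M).trace := by
  rw [← trace_transpose, transpose_mul, transpose_transpose, hA.eq, trace_mul_comm]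

end CommRing

/-- Unlike the set of `PosDef` matrices, this cone imposes no symmetry, so it is open in the space
of all matrices. -/
def posQuadCone (n : Type*) [Fintype n] : Set (Matrix n n ℝ) :=
  {M | ∀ x ≠ 0, 0 < x ⬝ᵥ M *ᵥ x}

theorem PosDef.mem_posQuadCone {M : Matrix n n ℝ} (hM : M.PosDef) : M ∈ posQuadCone n :=
  fun _ hx => hM.dotProduct_mulVec_pos hx

theorem posDef_half_add_transpose_of_mem_posQuadCone {M : Matrix n n ℝ}
    (hM : M ∈ posQuadCone n) : ((2 : ℝ)⁻¹ • (M + Mᵀ)).PosDef := by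
  refine .of_dotProduct_mulVec_pos ?_ fun x hx => ?_
  · simp [IsHermitian, conjTranspose_eq_transpose_of_trivial, add_comm]
  · simp only [star_trivial, smul_mulVec, add_mulVec, dotProduct_smul, dotProduct_add,
      dotProduct_transpose_mulVec, smul_eq_mul]
    linarith [hM x hx]

theorem smul_mem_posQuadCone {M : Matrix n n ℝ} (hM : M ∈ posQuadCone n) {t : ℝ} (ht : 0 < t) :
    t • M ∈ posQuadCone n := fun x hx => by
  simpa [smul_mulVec] using mul_pos ht (hM x hx)

theorem convex_posQuadCone : Convex ℝ (posQuadCone n) :=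
  convex_iff_forall_pos.2 fun M hM N hN a c ha hc _ x hx => by
    simp only [add_mulVec, smul_mulVec, dotProduct_add, dotProduct_smul, smul_eq_mul]
    exact add_pos (mul_pos ha (hM x hx)) (mul_pos hc (hN x hx))

theorem mem_posQuadCone_iff_forall_mem_sphere {M : Matrix n n ℝ} :
    M ∈ posQuadCone n ↔ ∀ x ∈ Metric.sphere (0 : n → ℝ) 1, 0 < x ⬝ᵥ M *ᵥ x := by
  refine ⟨fun hM x hx => hM x (ne_zero_of_mem_unit_sphere ⟨x, hx⟩), fun hM x hx => ?_⟩
  have hpos : 0 < ‖x‖ := norm_pos_iff.2 hx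
  have hu : ‖x‖⁻¹ • x ∈ Metric.sphere (0 : n → ℝ) 1 := by
    simp [norm_smul, hpos.ne']
  have hscale : x ⬝ᵥ M *ᵥ x = ‖x‖ ^ 2 * ((‖x‖⁻¹ • x) ⬝ᵥ M *ᵥ (‖x‖⁻¹ • x)) := by
    simp only [mulVec_smul, dotProduct_smul, smul_dotProduct, smul_eq_mul]
    field_simp
  rw [hscale]
  exact mul_pos (pow_pos hpos 2) (hM _ hu)

theorem isOpen_posQuadCone : IsOpen (posQuadCone n) := by
  have hcont : Continuous fun p : Matrix n n ℝ × (n → ℝ) => p.2 ⬝ᵥ p.1 *ᵥ p.2 := by fun_prop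
  refine isOpen_iff_mem_nhds.2 fun M hM => ?_
  rw [mem_posQuadCone_iff_forall_mem_sphere] at hM
  filter_upwards [(isCompact_sphere (0 : n → ℝ) 1).eventually_forall_of_forall_eventually
    (P := fun N x => 0 < x ⬝ᵥ N *ᵥ x) fun x hx =>
      (hcont.tendsto (M, x)).eventually (lt_mem_nhds (hM x hx))] with N hN
  exact mem_posQuadCone_iff_forall_mem_sphere.2 hN

theorem PosSemidef.mem_closure_posQuadCone [DecidableEq n] {M : Matrix n n ℝ}
    (hM : M.PosSemidef) : M ∈ closure (posQuadCone n) := by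
  have hcont : Continuous fun t : ℝ => M + t • (1 : Matrix n n ℝ) := by fun_prop
  have hlim : Filter.Tendsto (fun t : ℝ => M + t • 1) (nhdsWithin 0 (Set.Ioi 0)) (nhds M) := by
    simpa using (hcont.tendsto 0).mono_left nhdsWithin_le_nhds
  refine mem_closure_of_tendsto hlim ?_
  filter_upwards [self_mem_nhdsWithin] with t ht
  exact (PosDef.posSemidef_add hM (PosDef.one.smul ht)).mem_posQuadCone

end Matrix

section Alternative

variable {n ι : Type*} [Fintype n] [Fintype ι] {A : ι → Matrix n n ℝ} {b : ι → ℝ}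

theorem not_exists_certificate_of_posDef {P : Matrix n n ℝ} (hP : P.PosDef)
    (hPb : ∀ i, (A i * P).trace = b i) :
    ¬ ∃ y : ι → ℝ, b ⬝ᵥ y = 0 ∧ (∑ i, y i • A i).PosSemidef ∧ ∑ i, y i • A i ≠ 0 := by
  rintro ⟨y, hby, hZ, hZ0⟩
  refine hZ0 (hZ.eq_zero_of_trace_mul_posDef_eq_zero hP ?_)
  rw [trace_sum_smul_mul_s10, ← hby, dotProduct_comm]
  simp [dotProduct, hPb]

theorem exists_trace_sum_smul_mul_eq (g : Matrix n n ℝ →ₗ[ℝ] ℝ)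
    (hg : ∀ X, (∀ i, (A i * X).trace = 0) → g X = 0) :
    ∃ y : ι → ℝ, ∀ X, ((∑ i, y i • A i) * X).trace = g X := by
  have hspan := mem_span_of_iInf_ker_le_ker
    (L := fun i => traceLinearMap n ℝ ℝ ∘ₗ LinearMap.mulLeft ℝ (A i)) (K := g) fun X hX => by
      simp only [Submodule.mem_iInf, LinearMap.mem_ker] at hX ⊢
      exact hg X hX
  obtain ⟨y, hy⟩ := (Submodule.mem_span_range_iff_exists_fun ℝ).1 hspan
  refine ⟨y, fun X => ?_⟩
  rw [← hy, trace_sum_smul_mul_s10]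
  simp

theorem exists_certificate_of_not_exists_posDef [DecidableEq n] (hA : ∀ i, (A i).IsSymm)
    {X₀ : Matrix n n ℝ} (hX₀ : X₀.PosSemidef) (hX₀b : ∀ i, (A i * X₀).trace = b i)
    (hslater : ¬ ∃ P : Matrix n n ℝ, P.PosDef ∧ ∀ i, (A i * P).trace = b i) :
    ∃ y : ι → ℝ, b ⬝ᵥ y = 0 ∧ (∑ i, y i • A i).PosSemidef ∧ ∑ i, y i • A i ≠ 0 := by
  set T := {X : Matrix n n ℝ | ∀ i, (A i * X).trace = b i}
  have hT : Convex ℝ T := fun X hX Y hY s t _ _ hst i => by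
    simp only [mul_add, mul_smul_comm, trace_add, trace_smul, hX i, hY i, smul_eq_mul]
    rw [← add_mul, hst, one_mul]
  have hdisj : Disjoint (posQuadCone n) T := by
    refine Set.disjoint_left.2 fun M hM hMT =>
      hslater ⟨_, posDef_half_add_transpose_of_mem_posQuadCone hM, fun i => ?_⟩
    simp only [mul_smul_comm, mul_add, trace_smul, trace_add, (hA i).trace_mul_transpose, hMT i,
      smul_eq_mul]
    ring
  obtain ⟨f, u, hfU, hfT⟩ :=
    geometric_hahn_banach_open convex_posQuadCone isOpen_posQuadCone hT hdisj
  have hf_cone : ∀ M ∈ posQuadCone n, f M ≤ 0 := fun M hM =>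
    nonpos_of_forall_pos_mul_lt fun t ht => by
      simpa using hfU _ (smul_mem_posQuadCone hM ht)
  have hf_closure : ∀ M ∈ closure (posQuadCone n), f M ≤ 0 ∧ f M ≤ u := fun M hM =>
    closure_minimal (t := {N | f N ≤ 0 ∧ f N ≤ u}) (fun N hN => ⟨hf_cone N hN, (hfU N hN).le⟩)
      ((isClosed_le f.continuous continuous_const).inter
        (isClosed_le f.continuous continuous_const)) hM
  have hf_psd : ∀ M : Matrix n n ℝ, M.PosSemidef → f M ≤ 0 := fun M hM =>
    (hf_closure M hM.mem_closure_posQuadCone).1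
  have hu : u = 0 := by
    have h0 := (hf_closure 0 PosSemidef.zero.mem_closure_posQuadCone).2
    linarith [map_zero f, hf_psd X₀ hX₀, hfT X₀ hX₀b]
  have hfX₀ : f X₀ = 0 := le_antisymm (hf_psd X₀ hX₀) (hu ▸ hfT X₀ hX₀b)
  have hf_ker : ∀ X, (∀ i, (A i * X).trace = 0) → -f X = 0 := fun X hX => by
    have hline : ∀ t : ℝ, 0 ≤ t * f X := fun t => by
      simpa [hu, hfX₀] using hfT (X₀ + t • X) fun i => by simp [mul_add, hX₀b i, hX i]
    nlinarith [hline (-f X)]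
  obtain ⟨y, hy⟩ := exists_trace_sum_smul_mul_eq (A := A) (-(f : Matrix n n ℝ →ₗ[ℝ] ℝ)) hf_ker
  refine ⟨y, ?_, .of_dotProduct_mulVec_nonneg ?_ fun x => ?_, fun hZ => ?_⟩
  · have hZX₀ := hy X₀
    simp only [trace_sum_smul_mul_s10, hX₀b, LinearMap.neg_apply, ContinuousLinearMap.coe_coe, hfX₀,
      neg_zero] at hZX₀
    rw [dotProduct_comm, ← hZX₀]
    simp [dotProduct]
  · simp [IsHermitian, conjTranspose_eq_transpose_of_trivial, transpose_sum, (hA _).eq]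
  · rw [star_trivial, dotProduct_mulVec_eq_trace_mul_vecMulVec, hy]
    simpa using hf_psd _ (by simpa using posSemidef_vecMulVec_self_star x)
  · have hZ1 := hy 1
    simp only [hZ, zero_mul, trace_zero, LinearMap.neg_apply, ContinuousLinearMap.coe_coe] at hZ1
    linarith [hfU 1 PosDef.one.mem_posQuadCone]

end Alternative

/-- theorem of the alternative.  Let `𝒜(X) = (⟨A₁,X⟩,…,⟨A_l,X⟩)`
with each `Aᵢ` symmetric, and suppose the feasible set
`F_P = { X : 𝒜(X) = b, X ⪰ 0 }` is nonempty.  Then exactly one of the following holds: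
(I) there is a positive definite `P` with `𝒜(P) = b` (Slater condition), or
(II) there is `y` with `bᵀy = 0` such that `Z = Σᵢ yᵢ Aᵢ` is positive semidefinite
and nonzero. -/
theorem sdp_theorem_of_the_alternative (k l : ℕ)
    (A : Fin l → Matrix (Fin k) (Fin k) ℝ) (hA : ∀ i, (A i).IsSymm)
    (b : Fin l → ℝ)
    (hfeas : ∃ X : Matrix (Fin k) (Fin k) ℝ,
      X.PosSemidef ∧ ∀ i, (A i * X).trace = b i) :
    Xor'
      (∃ P : Matrix (Fin k) (Fin k) ℝ, P.PosDef ∧ ∀ i, (A i * P).trace = b i)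
      (∃ y : Fin l → ℝ, b ⬝ᵥ y = 0 ∧
        (∑ i, y i • A i).PosSemidef ∧ (∑ i, y i • A i) ≠ 0) := by
  obtain ⟨X₀, hX₀, hX₀b⟩ := hfeas
  by_cases hslater : ∃ P : Matrix (Fin k) (Fin k) ℝ, P.PosDef ∧ ∀ i, (A i * P).trace = b i
  · obtain ⟨P, hP, hPb⟩ := hslater
    exact Or.inl ⟨⟨P, hP, hPb⟩, not_exists_certificate_of_posDef hP hPb⟩
  · exact Or.inr ⟨exists_certificate_of_not_exists_posDef hA hX₀ hX₀b hslater, hslater⟩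
end

section
/- Let U be a real k×r matrix, F = { U M Uᵀ : M ∈ S₊^r }, let A_1,…,A_l ∈ S^k, and let b ∈ ℝ^l. Then there exists y ∈ ℝ^l with bᵀy = 0 such that Z := Σᵢ yᵢ A_i belongs to F* \ F^⊥, if and only if there exists y ∈ ℝ^l with bᵀy = 0 such that Z̄ := Σᵢ yᵢ Uᵀ A_i U is positive semidefinite and Z̄ ≠ 0. -/
/-!
Cycling the trace gives `⟨Z, U M Uᵀ⟩ = ⟨Uᵀ Z U, M⟩` with `Uᵀ Z U = Z̄`, so both conditions on `Z`
are conditions on `Z̄` tested against `S₊^r`. Testing against the rank-one matrices `x xᵀ` shows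
that the cone `S₊^r` is self-dual, so `Z ∈ F*` means `Z̄ ⪰ 0`; and for `Z̄ ⪰ 0`, `Z ∈ F^⊥` gives
`⟨Z̄, Z̄⟩ = 0`, i.e. `Z̄ = 0`.
-/

open Matrix
open scoped ComplexOrder

namespace Matrix

theorem trace_mul_mul_mul_transpose {m n R : Type*} [Fintype m] [Fintype n] [CommSemiring R]
    (Z : Matrix m m R) (U : Matrix m n R) (M : Matrix n n R) :
    (Z * (U * M * Uᵀ)).trace = (Uᵀ * Z * U * M).trace := by
  simp only [← Matrix.mul_assoc]
  rw [trace_mul_comm, Matrix.mul_assoc, Matrix.mul_assoc, Matrix.mul_assoc]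

theorem trace_mul_vecMulVec_star {n R : Type*} [Fintype n] [CommSemiring R] [StarRing R]
    (Z : Matrix n n R) (x : n → R) :
    (Z * vecMulVec x (star x)).trace = star x ⬝ᵥ (Z *ᵥ x) := by
  rw [mul_vecMulVec, trace_vecMulVec, dotProduct_comm]

theorem IsSymm.transpose_mul_mul {m n R : Type*} [Fintype m] [CommSemiring R]
    {A : Matrix m m R} (hA : A.IsSymm) (U : Matrix m n R) : (Uᵀ * A * U).IsSymm := by
  rw [IsSymm, transpose_mul, transpose_mul, transpose_transpose, hA.eq, Matrix.mul_assoc]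

variable {n 𝕜 : Type*} [Fintype n] [RCLike 𝕜] {Z M : Matrix n n 𝕜}

open scoped MatrixOrder in
theorem PosSemidef.trace_mul_nonneg (hZ : Z.PosSemidef) (hM : M.PosSemidef) :
    0 ≤ (Z * M).trace := by
  classical
  obtain ⟨B, rfl⟩ := CStarAlgebra.nonneg_iff_eq_star_mul_self.mp hM.nonneg
  rw [star_eq_conjTranspose, ← Matrix.mul_assoc, trace_mul_comm, ← Matrix.mul_assoc]
  exact (hZ.mul_mul_conjTranspose_same B).trace_nonneg

theorem IsHermitian.posSemidef_iff_forall_trace_mul_nonneg (hZ : Z.IsHermitian) :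
    Z.PosSemidef ↔ ∀ M : Matrix n n 𝕜, M.PosSemidef → 0 ≤ (Z * M).trace := by
  refine ⟨fun hZ _ hM ↦ hZ.trace_mul_nonneg hM, fun h ↦ .of_dotProduct_mulVec_nonneg hZ fun x ↦ ?_⟩
  rw [← trace_mul_vecMulVec_star]
  exact h _ (posSemidef_vecMulVec_self_star x)

theorem PosSemidef.eq_zero_iff_forall_trace_mul_eq_zero (hZ : Z.PosSemidef) :
    Z = 0 ↔ ∀ M : Matrix n n 𝕜, M.PosSemidef → (Z * M).trace = 0 := by
  refine ⟨fun h _ _ ↦ by rw [h, Matrix.zero_mul, trace_zero], fun h ↦ ?_⟩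
  have hZZ : (Zᴴ * Z).trace = 0 := by rw [hZ.isHermitian.eq]; exact h Z hZ
  exact trace_conjTranspose_mul_self_eq_zero_iff.mp hZZ

end Matrix

/-- For the face `F = { U M Uᵀ : M ∈ S₊^r }`, there exists `y` with
`bᵀy = 0` and `Z = Σᵢ yᵢ Aᵢ ∈ F* \ F^⊥` iff there exists `y` with `bᵀy = 0` such that
`Z̄ = Σᵢ yᵢ Uᵀ Aᵢ U` is positive semidefinite and nonzero. -/
theorem exposing_vector_iff_reduced (k r l : ℕ)
    (U : Matrix (Fin k) (Fin r) ℝ)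
    (A : Fin l → Matrix (Fin k) (Fin k) ℝ) (hA : ∀ i, (A i).IsSymm)
    (b : Fin l → ℝ) :
    (∃ y : Fin l → ℝ, b ⬝ᵥ y = 0 ∧
      -- `Z = Σᵢ yᵢ Aᵢ ∈ F*` : nonnegative inner product with every `U M Uᵀ`, `M ⪰ 0`
      (∀ M : Matrix (Fin r) (Fin r) ℝ, M.PosSemidef →
        0 ≤ ((∑ i, y i • A i) * (U * M * Uᵀ)).trace) ∧
      -- `Z ∉ F^⊥`
      ¬ (∀ M : Matrix (Fin r) (Fin r) ℝ, M.PosSemidef →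
        ((∑ i, y i • A i) * (U * M * Uᵀ)).trace = 0)) ↔
    (∃ y : Fin l → ℝ, b ⬝ᵥ y = 0 ∧
      (∑ i, y i • (Uᵀ * A i * U)).PosSemidef ∧
      (∑ i, y i • (Uᵀ * A i * U)) ≠ 0) := by
  have reduce (y : Fin l → ℝ) (M : Matrix (Fin r) (Fin r) ℝ) :
      ((∑ i, y i • A i) * (U * M * Uᵀ)).trace = ((∑ i, y i • (Uᵀ * A i * U)) * M).trace := by
    rw [trace_mul_mul_mul_transpose, Matrix.mul_sum, Matrix.sum_mul]
    simp only [Matrix.mul_smul, Matrix.smul_mul]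
  simp only [reduce]
  refine exists_congr fun y ↦ and_congr_right fun _ ↦ ?_
  have hZ : (∑ i, y i • (Uᵀ * A i * U)).IsHermitian :=
    isSelfAdjoint_sum _ fun i _ ↦
      (isHermitian_iff_isSymm.mpr ((hA i).transpose_mul_mul U)).smul (IsSelfAdjoint.all (y i))
  rw [← hZ.posSemidef_iff_forall_trace_mul_nonneg]
  exact and_congr_right fun hpsd ↦ not_congr hpsd.eq_zero_iff_forall_trace_mul_eq_zero.symm
end

section
/- Let U be a real k×r matrix, F = { U M Uᵀ : M ∈ S₊^r }, and let Z ∈ S^k be such that Z̄ := Uᵀ Z U is positive semidefinite. Let V be a real r×r̄ matrix whose columns form a basis of the null space of Z̄ (so Z̄V = 0, V has linearly independent columns, and rank V = dim ker Z̄). Then {Z}^⊥ ∩ F = { U V M̄ Vᵀ Uᵀ : M̄ ∈ S₊^{r̄} }, where {Z}^⊥ = { X ∈ S^k : ⟨X, Z⟩ = 0 }. -/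
open Matrix
open scoped ComplexOrder

/-!
Write `M = S Sᴴ` and `Z̄ = Cᴴ C`. Then `⟨U M Uᵀ, Z⟩ = trace (M Z̄) = ‖C S‖²`, so orthogonality
forces `C S = 0`, hence `Z̄ S = 0`: the columns of `S` lie in `ker Z̄ = range V`, so `S = V B` and
`M = V (B Bᴴ) Vᵀ`. Conversely `Z̄ V = 0` makes `⟨U V M̄ (U V)ᵀ, Z⟩ = trace (M̄ Vᵀ Z̄ V)` vanish.
-/

namespace Matrix

variable {m n p l R 𝕜 : Type*} [Fintype n]

theorem trace_mul_mul_transpose_mul [CommSemiring R] [Fintype m] (A : Matrix m n R)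
    (M : Matrix n n R) (Z : Matrix m m R) :
    (A * M * Aᵀ * Z).trace = (M * (Aᵀ * Z * A)).trace := by
  rw [← Matrix.mul_assoc, ← Matrix.mul_assoc, trace_mul_comm _ A]
  simp only [Matrix.mul_assoc]

theorem exists_eq_mul_of_mul_eq_zero [Fintype l] [Semiring R] {A : Matrix m n R}
    {V : Matrix n l R}
    (hV : ∀ w : n → R, A *ᵥ w = 0 → ∃ c : l → R, w = V *ᵥ c) {S : Matrix n p R}
    (hS : A * S = 0) : ∃ B : Matrix l p R, S = V * B := by
  choose c hc using fun j => hV (fun i => S i j) (by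
    ext i; simpa [mul_apply, mulVec, dotProduct] using congrFun₂ hS i j)
  refine ⟨(of c)ᵀ, ?_⟩
  ext i j
  simpa [mul_apply, mulVec, dotProduct] using congrFun (hc j) i

variable [RCLike 𝕜]

open scoped MatrixOrder in
theorem PosSemidef.exists_eq_conjTranspose_mul_self {A : Matrix n n 𝕜} (hA : A.PosSemidef) :
    ∃ B : Matrix n n 𝕜, A = Bᴴ * B := by
  classical
  exact CStarAlgebra.nonneg_iff_eq_star_mul_self.mp hA.nonneg

theorem PosSemidef.mul_eq_zero_of_trace_conjTranspose_mul_mul_eq_zero [Fintype p]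
    {A : Matrix n n 𝕜} (hA : A.PosSemidef) {B : Matrix n p 𝕜} (h : (Bᴴ * A * B).trace = 0) :
    A * B = 0 := by
  obtain ⟨C, rfl⟩ := hA.exists_eq_conjTranspose_mul_self
  have hCB : C * B = 0 := trace_conjTranspose_mul_self_eq_zero_iff.mp <| by
    simpa only [conjTranspose_mul, Matrix.mul_assoc] using h
  rw [Matrix.mul_assoc, hCB, Matrix.mul_zero]

theorem PosSemidef.exists_eq_mul_conjTranspose_of_trace_mul_eq_zero {A M : Matrix n n 𝕜}
    (hA : A.PosSemidef) (hM : M.PosSemidef) (h : (M * A).trace = 0) :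
    ∃ S : Matrix n n 𝕜, M = S * Sᴴ ∧ A * S = 0 := by
  obtain ⟨B, rfl⟩ := hM.exists_eq_conjTranspose_mul_self
  refine ⟨Bᴴ, by rw [conjTranspose_conjTranspose],
    hA.mul_eq_zero_of_trace_conjTranspose_mul_mul_eq_zero ?_⟩
  rwa [conjTranspose_conjTranspose, trace_mul_comm, ← Matrix.mul_assoc]

end Matrix

theorem orthogonal_slice_of_face_general (k r rb : ℕ)
    (U : Matrix (Fin k) (Fin r) ℝ)
    (Z : Matrix (Fin k) (Fin k) ℝ)
    (hZb : (Uᵀ * Z * U).PosSemidef)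
    (V : Matrix (Fin r) (Fin rb) ℝ)
    -- the columns of `V` lie in the null space of `Z̄`
    (hZV : (Uᵀ * Z * U) * V = 0)
    -- the columns of `V` span the null space of `Z̄`
    (hVspan : ∀ w : Fin r → ℝ, (Uᵀ * Z * U).mulVec w = 0 →
      ∃ c : Fin rb → ℝ, w = V.mulVec c) :
    {X : Matrix (Fin k) (Fin k) ℝ | (X * Z).trace = 0} ∩
      {X : Matrix (Fin k) (Fin k) ℝ |
        ∃ M : Matrix (Fin r) (Fin r) ℝ, M.PosSemidef ∧ X = U * M * Uᵀ} =
    {X : Matrix (Fin k) (Fin k) ℝ |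
      ∃ Mb : Matrix (Fin rb) (Fin rb) ℝ, Mb.PosSemidef ∧
        X = (U * V) * Mb * (U * V)ᵀ} := by
  ext X
  constructor
  · rintro ⟨hX, M, hM, rfl⟩
    rw [Set.mem_ofPred_eq, trace_mul_mul_transpose_mul] at hX
    obtain ⟨S, rfl, hS⟩ := hZb.exists_eq_mul_conjTranspose_of_trace_mul_eq_zero hM hX
    obtain ⟨B, rfl⟩ := exists_eq_mul_of_mul_eq_zero hVspan hS
    refine ⟨B * Bᴴ, posSemidef_self_mul_conjTranspose B, ?_⟩
    simp [transpose_mul, Matrix.mul_assoc]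
  · rintro ⟨Mb, hMb, rfl⟩
    refine ⟨?_, V * Mb * Vᵀ, hMb.mul_mul_conjTranspose_same V, ?_⟩
    · have hUV : (U * V)ᵀ * Z * (U * V) = Vᵀ * (Uᵀ * Z * U * V) := by
        simp only [transpose_mul, Matrix.mul_assoc]
      rw [Set.mem_ofPred_eq, trace_mul_mul_transpose_mul, hUV, hZV, Matrix.mul_zero,
        Matrix.mul_zero, trace_zero]
    · simp [transpose_mul, Matrix.mul_assoc]

/-- Let `F = { U M Uᵀ : M ∈ S₊^r }`, let `Z` be symmetric with
`Z̄ := Uᵀ Z U` positive semidefinite, and let the columns of `V` form a basis of the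
null space of `Z̄`.  Then `{Z}^⊥ ∩ F = { (UV) M̄ (UV)ᵀ : M̄ ∈ S₊^r̄ }`. -/
theorem orthogonal_slice_of_face (k r rb : ℕ)
    (U : Matrix (Fin k) (Fin r) ℝ)
    (Z : Matrix (Fin k) (Fin k) ℝ) (hZsymm : Z.IsSymm)
    (hZb : (Uᵀ * Z * U).PosSemidef)
    (V : Matrix (Fin r) (Fin rb) ℝ)
    -- the columns of `V` lie in the null space of `Z̄`
    (hZV : (Uᵀ * Z * U) * V = 0)
    -- the columns of `V` are linearly independent
    (hVind : LinearIndependent ℝ (fun j : Fin rb => fun i : Fin r => V i j))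
    -- the columns of `V` span the null space of `Z̄`
    (hVspan : ∀ w : Fin r → ℝ, (Uᵀ * Z * U).mulVec w = 0 →
      ∃ c : Fin rb → ℝ, w = V.mulVec c) :
    {X : Matrix (Fin k) (Fin k) ℝ | (X * Z).trace = 0} ∩
      {X : Matrix (Fin k) (Fin k) ℝ |
        ∃ M : Matrix (Fin r) (Fin r) ℝ, M.PosSemidef ∧ X = U * M * Uᵀ} =
    {X : Matrix (Fin k) (Fin k) ℝ |
      ∃ Mb : Matrix (Fin rb) (Fin rb) ℝ, Mb.PosSemidef ∧
        X = (U * V) * Mb * (U * V)ᵀ} :=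
  orthogonal_slice_of_face_general k r rb U Z hZb V hZV hVspan
end

section
/- (Eckart–Young for the positive semidefinite cone) Let X ∈ S^k have spectral decomposition X = Σ_{i=1}^k μ_i u_i u_iᵀ with eigenvalues μ_1 ≥ μ_2 ≥ ⋯ ≥ μ_k and orthonormal eigenvectors u_1,…,u_k. For 0 ≤ r ≤ k define P_r(X) = Σ_{i=1}^r max(μ_i, 0)·u_i u_iᵀ. Then P_r(X) is positive semidefinite with rank at most r, and for every Y ∈ S₊^k with rank(Y) ≤ r one has ‖X − P_r(X)‖_F ≤ ‖X − Y‖_F, where ‖·‖_F is the Frobenius norm. -/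
/-!
Write `X = Q diag(μ) Qᵀ` and, by the spectral theorem, `Y = V diag(λ) Vᵀ` with `Q, V` orthogonal,
`λ ≥ 0` and at most `r` of the `λⱼ` nonzero. With `W = QᵀV`, orthogonal invariance of the
Frobenius norm gives `‖X - Y‖² = ∑ᵢⱼ Wᵢⱼ² (μᵢ - λⱼ)²`, and `(Wᵢⱼ²)` is doubly stochastic.
Since `(μ - λ)² ≥ (μ⁻)² + [λ = 0] (μ⁺)²` for `λ ≥ 0`, this is at least
`∑ᵢ (μᵢ⁻)² + ∑ᵢ (μᵢ⁺)² tᵢ`, where `tᵢ ∈ [0, 1]` is the weight row `i` puts on the at least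
`k - r` columns with `λⱼ = 0`. As `(μᵢ⁺)²` is antitone, the weights are best spent on the last
`k - r` indices, which yields `∑ᵢ (μᵢ⁻)² + ∑_{i ≥ r} (μᵢ⁺)² = ‖X - P_r(X)‖²`.
-/

open Matrix

section Frobenius

variable {n : Type*} [Fintype n]

lemma trace_transpose_mul_self_eq_sum_sq {m : Type*} [Fintype m] (A : Matrix m n ℝ) :
    (Aᵀ * A).trace = ∑ i, ∑ j, A i j ^ 2 := by
  simp only [trace, diag, mul_apply, transpose_apply, ← sq]
  exact Finset.sum_comm

variable [DecidableEq n] {Q : Matrix n n ℝ}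

lemma trace_transpose_mul_self_orthogonal_mul (hQ : Q ∈ orthogonalGroup n ℝ)
    (A : Matrix n n ℝ) : ((Q * A)ᵀ * (Q * A)).trace = (Aᵀ * A).trace := by
  rw [transpose_mul, Matrix.mul_assoc, ← Matrix.mul_assoc Qᵀ,
    (mem_orthogonalGroup_iff' n ℝ).mp hQ, Matrix.one_mul]

lemma trace_transpose_mul_self_mul_orthogonal (hQ : Q ∈ orthogonalGroup n ℝ)
    (A : Matrix n n ℝ) : ((A * Q)ᵀ * (A * Q)).trace = (Aᵀ * A).trace := by
  rw [transpose_mul, Matrix.mul_assoc, trace_mul_comm, Matrix.mul_assoc, Matrix.mul_assoc,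
    (mem_orthogonalGroup_iff n ℝ).mp hQ, Matrix.mul_one]

lemma sum_sq_row_of_mem_orthogonalGroup (hQ : Q ∈ orthogonalGroup n ℝ) (i : n) :
    ∑ j, Q i j ^ 2 = 1 := by
  simpa [mul_apply, sq] using congrFun (congrFun ((mem_orthogonalGroup_iff n ℝ).mp hQ) i) i

lemma sum_sq_col_of_mem_orthogonalGroup (hQ : Q ∈ orthogonalGroup n ℝ) (j : n) :
    ∑ i, Q i j ^ 2 = 1 := by
  simpa [mul_apply, sq] using congrFun (congrFun ((mem_orthogonalGroup_iff' n ℝ).mp hQ) j) j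

lemma trace_transpose_mul_self_sub_conj_diagonal {R : Matrix n n ℝ}
    (hQ : Q ∈ orthogonalGroup n ℝ) (hR : R ∈ orthogonalGroup n ℝ) (d e : n → ℝ) :
    ((Q * diagonal d * Qᵀ - R * diagonal e * Rᵀ)ᵀ *
        (Q * diagonal d * Qᵀ - R * diagonal e * Rᵀ)).trace =
      ∑ i, ∑ j, (Qᵀ * R) i j ^ 2 * (d i - e j) ^ 2 := by
  set W := Qᵀ * R
  have hmul_R : (Q * diagonal d * Qᵀ - R * diagonal e * Rᵀ) * R =
      Q * (diagonal d * W - W * diagonal e) := by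
    have hQQ : ∀ N, Q * (Qᵀ * N) = N := fun N => by
      rw [← Matrix.mul_assoc, (mem_orthogonalGroup_iff n ℝ).mp hQ, Matrix.one_mul]
    simp [W, Matrix.mul_sub, Matrix.sub_mul, Matrix.mul_assoc, hQQ,
      (mem_orthogonalGroup_iff' n ℝ).mp hR]
  rw [← trace_transpose_mul_self_mul_orthogonal hR, hmul_R,
    trace_transpose_mul_self_orthogonal_mul hQ, trace_transpose_mul_self_eq_sum_sq]
  simp only [Matrix.sub_apply, diagonal_mul, mul_diagonal]
  exact Finset.sum_congr rfl fun i _ => Finset.sum_congr rfl fun j _ => by ring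

end Frobenius

lemma sum_smul_vecMulVec_self_eq {m n : Type*} [Fintype m] [DecidableEq m] (u : m → n → ℝ)
    (d : m → ℝ) : ∑ i, d i • vecMulVec (u i) (u i) = (of u)ᵀ * diagonal d * of u := by
  ext a b
  simp [Matrix.sum_apply, vecMulVec_apply, mul_apply, diagonal_apply, mul_assoc, mul_left_comm]

lemma rank_mul_diagonal_mul_transpose_le {n : Type*} [Fintype n] [DecidableEq n]
    (Q : Matrix n n ℝ) (d : n → ℝ) :
    (Q * diagonal d * Qᵀ).rank ≤ Fintype.card {i // d i ≠ 0} :=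
  calc _ ≤ (Q * diagonal d).rank := rank_mul_le_left _ _
    _ ≤ (diagonal d).rank := rank_mul_le_right _ _
    _ = _ := rank_diagonal d

lemma Matrix.PosSemidef.exists_orthogonal_diagonal {n : Type*} [Fintype n] [DecidableEq n]
    {Y : Matrix n n ℝ} (hY : Y.PosSemidef) :
    ∃ V ∈ orthogonalGroup n ℝ, ∃ l : n → ℝ, 0 ≤ l ∧ Fintype.card {j // l j ≠ 0} = Y.rank ∧
      Y = V * diagonal l * Vᵀ := by
  refine ⟨hY.1.eigenvectorUnitary, hY.1.eigenvectorUnitary.2, hY.1.eigenvalues,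
    hY.eigenvalues_nonneg, hY.1.rank_eq_card_non_zero_eigs.symm, ?_⟩
  conv_lhs => rw [hY.1.spectral_theorem, Unitary.conjStarAlgAut_apply]
  simp [star_eq_conjTranspose, conjTranspose_eq_transpose_of_trivial]

lemma sum_le_sum_mul_of_card_le_sum {ι : Type*} [Fintype ι] [DecidableEq ι] (A : Finset ι)
    {a t : ι → ℝ} (ha : 0 ≤ a) (hA : ∀ i ∈ A, ∀ j ∉ A, a i ≤ a j) (ht0 : 0 ≤ t) (ht1 : t ≤ 1)
    (hcard : (A.card : ℝ) ≤ ∑ i, t i) :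
    ∑ i ∈ A, a i ≤ ∑ i, a i * t i := by
  rcases A.eq_empty_or_nonempty with rfl | hne
  · simpa using Finset.sum_nonneg fun i _ => mul_nonneg (ha i) (ht0 i)
  obtain ⟨m, hm, hmax⟩ := A.exists_max_image a hne
  have hdeficit : ∑ i ∈ A, (1 - t i) ≤ ∑ i ∈ Aᶜ, t i := by
    rw [Finset.sum_sub_distrib, Finset.sum_const, nsmul_one]
    linarith [Finset.sum_add_sum_compl A t]
  calc ∑ i ∈ A, a i = ∑ i ∈ A, a i * (1 - t i) + ∑ i ∈ A, a i * t i := by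
        rw [← Finset.sum_add_distrib]; exact Finset.sum_congr rfl fun i _ => by ring
    _ ≤ a m * ∑ i ∈ A, (1 - t i) + ∑ i ∈ A, a i * t i := by
        rw [Finset.mul_sum]
        gcongr with i hi
        · exact sub_nonneg.mpr (ht1 i)
        · exact hmax i hi
    _ ≤ a m * ∑ i ∈ Aᶜ, t i + ∑ i ∈ A, a i * t i := by gcongr; exact ha m
    _ ≤ ∑ i ∈ Aᶜ, a i * t i + ∑ i ∈ A, a i * t i := by
        rw [Finset.mul_sum]
        gcongr with i hi
        · exact ht0 i
        · exact hA m hm i (Finset.mem_compl.mp hi)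
    _ = ∑ i, a i * t i := Finset.sum_compl_add_sum A _

lemma sq_min_zero_add_le_sq_sub {x l : ℝ} (hl : 0 ≤ l) :
    min x 0 ^ 2 + (if l = 0 then max x 0 ^ 2 else 0) ≤ (x - l) ^ 2 := by
  rcases le_total x 0 with h | h <;> split_ifs with hl0 <;> simp [h, hl0] <;> nlinarith

/-- The eigenvalues of `P_r(X)`: `P_r(X) = Q diag(rankTruncPosPart r μ) Qᵀ` when
`X = Q diag(μ) Qᵀ`. -/
def rankTruncPosPart {k : ℕ} (r : ℕ) (μ : Fin k → ℝ) (i : Fin k) : ℝ :=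
  if (i : ℕ) < r then max (μ i) 0 else 0

lemma rankTruncPosPart_nonneg {k : ℕ} (r : ℕ) (μ : Fin k → ℝ) : 0 ≤ rankTruncPosPart r μ :=
  fun i => by unfold rankTruncPosPart; split_ifs <;> simp

lemma card_rankTruncPosPart_ne_zero_le {k : ℕ} (r : ℕ) (μ : Fin k → ℝ) :
    Fintype.card {i // rankTruncPosPart r μ i ≠ 0} ≤ r :=
  calc _ ≤ Fintype.card (Fin r) := Fintype.card_le_of_injective
          (fun i => ⟨i.1, by by_contra h; exact i.2 (if_neg h)⟩)
          (fun i j h => Subtype.ext (Fin.ext (Fin.mk.inj_iff.mp h)))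
    _ = r := Fintype.card_fin r

lemma sq_sub_rankTruncPosPart {k r : ℕ} (μ : Fin k → ℝ) (i : Fin k) :
    (μ i - rankTruncPosPart r μ i) ^ 2 =
      min (μ i) 0 ^ 2 + if r ≤ (i : ℕ) then max (μ i) 0 ^ 2 else 0 := by
  unfold rankTruncPosPart
  rcases le_total (μ i) 0 with h | h <;> split_ifs <;> first | omega | simp [h]

lemma card_filter_le_val_le_card_filter_eq_zero {k r : ℕ} {l : Fin k → ℝ}
    (hrank : Fintype.card {j // l j ≠ 0} ≤ r) :
    (Finset.univ.filter fun i : Fin k => r ≤ (i : ℕ)).card ≤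
      (Finset.univ.filter fun j => l j = 0).card := by
  have hzero := Finset.card_filter_add_card_filter_not (s := Finset.univ) (fun j => l j = 0)
  have hlate := Finset.card_filter_add_card_filter_not (s := Finset.univ)
    (fun i : Fin k => r ≤ (i : ℕ))
  rw [Fintype.card_subtype] at hrank
  simp only [not_le, ne_eq, Fin.card_filter_val_lt, Finset.card_univ, Fintype.card_fin]
    at hzero hlate hrank
  omega

lemma sum_sq_sub_rankTruncPosPart_le {k r : ℕ} {μ l : Fin k → ℝ} (hμ : Antitone μ)
    (hl : 0 ≤ l) (hrank : Fintype.card {j // l j ≠ 0} ≤ r) {S : Fin k → Fin k → ℝ}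
    (hS : ∀ i j, 0 ≤ S i j) (hrow : ∀ i, ∑ j, S i j = 1) (hcol : ∀ j, ∑ i, S i j = 1) :
    ∑ i, (μ i - rankTruncPosPart r μ i) ^ 2 ≤ ∑ i, ∑ j, S i j * (μ i - l j) ^ 2 := by
  set A : Finset (Fin k) := {i | r ≤ (i : ℕ)}
  set Z : Finset (Fin k) := {j | l j = 0}
  set t : Fin k → ℝ := fun i => ∑ j ∈ Z, S i j
  have hlhs : ∑ i, (μ i - rankTruncPosPart r μ i) ^ 2 =
      ∑ i, min (μ i) 0 ^ 2 + ∑ i ∈ A, max (μ i) 0 ^ 2 := by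
    simp only [sq_sub_rankTruncPosPart, Finset.sum_add_distrib, A, Finset.sum_filter]
  have hrhs : ∑ i, min (μ i) 0 ^ 2 + ∑ i, max (μ i) 0 ^ 2 * t i ≤
      ∑ i, ∑ j, S i j * (μ i - l j) ^ 2 := by
    calc _ = ∑ i, ∑ j, S i j * (min (μ i) 0 ^ 2 + if l j = 0 then max (μ i) 0 ^ 2 else 0) := by
          rw [← Finset.sum_add_distrib]
          refine Finset.sum_congr rfl fun i _ => ?_
          simp only [mul_add, Finset.sum_add_distrib, ← Finset.sum_mul, hrow, one_mul]
          congr 1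
          simp only [t, Z, Finset.sum_filter, Finset.mul_sum, mul_ite, mul_zero, mul_comm,
            ite_mul, zero_mul]
      _ ≤ _ := by gcongr with i _ j _; exacts [hS i j, sq_min_zero_add_le_sq_sub (hl j)]
  have hcard : (A.card : ℝ) ≤ ∑ i, t i := by
    have hsum_t : ∑ i, t i = Z.card := by
      simp only [t]; rw [Finset.sum_comm]; simp [hcol]
    rw [hsum_t, Nat.cast_le]
    exact card_filter_le_val_le_card_filter_eq_zero hrank
  have hrearrange := sum_le_sum_mul_of_card_le_sum A (a := fun i => max (μ i) 0 ^ 2) (t := t)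
    (fun i => sq_nonneg _)
    (fun i hi j hj => by
      simp only [A, Finset.mem_filter, Finset.mem_univ, true_and, not_le] at hi hj
      have := hμ (show j ≤ i from Fin.le_def.mpr (by omega))
      gcongr)
    (fun i => Finset.sum_nonneg fun j _ => hS i j)
    (fun i => (Finset.sum_le_univ_sum_of_nonneg (hS i)).trans_eq (hrow i)) hcard
  linarith

theorem eckart_young_psd_general (k r : ℕ)
    (X : Matrix (Fin k) (Fin k) ℝ)
    (μ : Fin k → ℝ) (hmono : Antitone μ)
    (u : Fin k → (Fin k → ℝ))
    (horth : ∀ i j, u i ⬝ᵥ u j = if i = j then (1 : ℝ) else 0)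
    (hdecomp : X = ∑ i, μ i • vecMulVec (u i) (u i))
    (P : Matrix (Fin k) (Fin k) ℝ)
    (hP : P = ∑ i ∈ Finset.univ.filter (fun i : Fin k => (i : ℕ) < r),
      max (μ i) 0 • vecMulVec (u i) (u i)) :
    P.PosSemidef ∧ P.rank ≤ r ∧
    ∀ Y : Matrix (Fin k) (Fin k) ℝ, Y.PosSemidef → Y.rank ≤ r →
      Real.sqrt (((X - P)ᵀ * (X - P)).trace) ≤
        Real.sqrt (((X - Y)ᵀ * (X - Y)).trace) := by
  set Q := (of u)ᵀ
  have hQ : Q ∈ orthogonalGroup (Fin k) ℝ := by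
    rw [mem_orthogonalGroup_iff', transpose_transpose]
    ext i j
    simpa [Q, mul_apply, dotProduct, one_apply] using horth i j
  have hX : X = Q * diagonal μ * Qᵀ := by
    rw [hdecomp, sum_smul_vecMulVec_self_eq, transpose_transpose]
  have hP' : P = Q * diagonal (rankTruncPosPart r μ) * Qᵀ := by
    rw [hP, Finset.sum_filter, transpose_transpose, ← sum_smul_vecMulVec_self_eq]
    simp only [rankTruncPosPart, ite_smul, zero_smul]
  refine ⟨?_, ?_, fun Y hY hYr => Real.sqrt_le_sqrt ?_⟩
  · rw [hP']
    exact (posSemidef_diagonal_iff.mpr (rankTruncPosPart_nonneg r μ)).mul_mul_conjTranspose_same Q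
  · rw [hP']
    exact (rank_mul_diagonal_mul_transpose_le Q _).trans (card_rankTruncPosPart_ne_zero_le r μ)
  · obtain ⟨V, hV, l, hl, hlY, rfl⟩ := hY.exists_orthogonal_diagonal
    have hW : Qᵀ * V ∈ orthogonalGroup (Fin k) ℝ :=
      Submonoid.mul_mem _ (transpose_mem_unitaryGroup_iff.mpr hQ) hV
    rw [hX, hP', trace_transpose_mul_self_sub_conj_diagonal hQ hQ,
      trace_transpose_mul_self_sub_conj_diagonal hQ hV, (mem_orthogonalGroup_iff' _ ℝ).mp hQ]
    simpa [one_apply] using sum_sq_sub_rankTruncPosPart_le hmono hl (hlY ▸ hYr)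
      (fun i j => sq_nonneg _) (sum_sq_row_of_mem_orthogonalGroup hW)
      (sum_sq_col_of_mem_orthogonalGroup hW)

/-- Eckart–Young for the positive semidefinite cone.  Let
`X = Σᵢ μᵢ uᵢuᵢᵀ` be a spectral decomposition of the symmetric matrix `X` with
`μ₁ ≥ ⋯ ≥ μ_k` and orthonormal `uᵢ`, and for `0 ≤ r ≤ k` let
`P = Σ_{i < r} max(μᵢ,0) uᵢuᵢᵀ`.  Then `P` is positive semidefinite of rank at most
`r`, and `P` is a closest (in Frobenius norm) matrix to `X` among all positive
semidefinite matrices of rank at most `r`. -/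
theorem eckart_young_psd (k r : ℕ) (hr : r ≤ k)
    (X : Matrix (Fin k) (Fin k) ℝ) (hX : X.IsSymm)
    (μ : Fin k → ℝ) (hmono : Antitone μ)
    (u : Fin k → (Fin k → ℝ))
    (horth : ∀ i j, u i ⬝ᵥ u j = if i = j then (1 : ℝ) else 0)
    (hdecomp : X = ∑ i, μ i • vecMulVec (u i) (u i))
    (P : Matrix (Fin k) (Fin k) ℝ)
    (hP : P = ∑ i ∈ Finset.univ.filter (fun i : Fin k => (i : ℕ) < r),
      max (μ i) 0 • vecMulVec (u i) (u i)) :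
    P.PosSemidef ∧ P.rank ≤ r ∧
    ∀ Y : Matrix (Fin k) (Fin k) ℝ, Y.PosSemidef → Y.rank ≤ r →
      Real.sqrt (((X - P)ᵀ * (X - P)).trace) ≤
        Real.sqrt (((X - Y)ᵀ * (X - Y)).trace) :=
  eckart_young_psd_general k r X μ hmono u horth hdecomp P hP
end
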